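/- arXiv:2104.11352 — 6 statements merged into one kernel-verified Lean document; each statement's English description precedes it below -/
import Mathlib

section
/- Let β_0 < β_1 < ⋯ < β_g be positive integers, e_0 = β_0, e_i = gcd(e_{i-1}, β_i), n_i = e_{i-1}/e_i (assume n_i > 1 for 1 ≤ i ≤ g and e_g = 1). Define v_0 = β_0, v_{i+1} = n_i v_i + β_{i+1} − β_i for 0 ≤ i < g (with n_0 = 1). Let α ∈ ℤ, let k = max{ i : e_i ∤ α } and assume 0 ≤ k ≤ g − 1. With G_j = {η ∈ ℂ : η^{e_j} = 1}, one has Σ_{i=1}^{g} ( Σ_{η ∈ G_{i-1} \ G_i} (1 − η^α) ) · β_i = e_k · v_{k+1}. In particular this sum is nonzero. -/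
/-!
Summing `1 - η ^ α` over all `m`-th roots of unity gives `m` if `m ∤ α` and `0` otherwise, so
the inner sum over `G_{i-1} \ G_i` is `c_{i-1} - c_i`, where `c_j = e_j` for `j ≤ k` and
`c_j = 0` for `k < j ≤ g`. Summation by parts turns `S` into
`e_0 β_0 + ∑_{i ≤ k} e_i (β_{i+1} - β_i)`, and since `n_i e_i = e_{i-1}` the recursion for `v`
reads `e_i v_{i+1} = e_{i-1} v_i + e_i (β_{i+1} - β_i)`, which telescopes to the same value
for `e_k v_{k+1}`.
-/

open Finset Polynomial

namespace IsPrimitiveRoot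

variable {K : Type*} [Field K] [DecidableEq K] {ζ : K} {m : ℕ}

theorem sum_nthRoots_one_zpow (hζ : IsPrimitiveRoot ζ m) (α : ℤ) :
    ∑ η ∈ (nthRoots m (1 : K)).toFinset, η ^ α = if (m : ℤ) ∣ α then (m : K) else 0 := by
  obtain rfl | hm := m.eq_zero_or_pos
  · simp
  have hmem {η : K} : η ∈ (nthRoots m (1 : K)).toFinset ↔ η ^ m = 1 := by
    rw [Multiset.mem_toFinset, mem_nthRoots hm]
  split_ifs with hdvd
  · obtain ⟨c, rfl⟩ := hdvd
    rw [sum_congr rfl fun η hη ↦ by rw [zpow_mul, zpow_natCast, hmem.mp hη, one_zpow],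
      sum_const, Multiset.toFinset_card_of_nodup hζ.nthRoots_one_nodup, hζ.card_nthRoots_one,
      nsmul_one]
  -- multiplication by `ζ` permutes the `m`-th roots of unity and scales the sum by `ζ ^ α ≠ 1`
  set S := ∑ η ∈ (nthRoots m (1 : K)).toFinset, η ^ α
  have hζ0 : ζ ≠ 0 := hζ.ne_zero hm.ne'
  have hinv : ζ ^ α * S = S := by
    rw [mul_sum]
    refine sum_nbij' (ζ * ·) (ζ⁻¹ * ·) (fun η hη ↦ ?_) (fun η hη ↦ ?_) (fun η _ ↦ ?_)
      (fun η _ ↦ ?_) (fun η _ ↦ (mul_zpow ζ η α).symm)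
    · simp only [hmem] at hη ⊢
      rw [mul_pow, hζ.pow_eq_one, hη, one_mul]
    · simp only [hmem] at hη ⊢
      rw [mul_pow, inv_pow, hζ.pow_eq_one, hη, inv_one, one_mul]
    · simp [hζ0]
    · simp [hζ0]
  have hne : ζ ^ α - 1 ≠ 0 := sub_ne_zero.mpr (mt (hζ.zpow_eq_one_iff_dvd α).mp hdvd)
  have hS : (ζ ^ α - 1) * S = 0 := by rw [sub_one_mul, hinv, sub_self]
  exact (mul_eq_zero.mp hS).resolve_left hne

theorem sum_nthRoots_one_one_sub_zpow (hζ : IsPrimitiveRoot ζ m) (α : ℤ) :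
    ∑ η ∈ (nthRoots m (1 : K)).toFinset, (1 - η ^ α) = if (m : ℤ) ∣ α then 0 else (m : K) := by
  rw [sum_sub_distrib, sum_const, Multiset.toFinset_card_of_nodup hζ.nthRoots_one_nodup,
    hζ.card_nthRoots_one, nsmul_one, hζ.sum_nthRoots_one_zpow]
  split_ifs <;> simp

end IsPrimitiveRoot

theorem Polynomial.nthRoots_one_toFinset_subset_of_dvd {R : Type*} [CommRing R] [IsDomain R]
    [DecidableEq R] {a b : ℕ} (ha : 0 < a) (hba : b ∣ a) :
    (nthRoots b (1 : R)).toFinset ⊆ (nthRoots a (1 : R)).toFinset := by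
  intro η hη
  rw [Multiset.mem_toFinset, mem_nthRoots (Nat.pos_of_dvd_of_pos hba ha)] at hη
  obtain ⟨t, rfl⟩ := hba
  rw [Multiset.mem_toFinset, mem_nthRoots ha, pow_mul, hη, one_pow]

theorem Complex.sum_sdiff_nthRoots_one_one_sub_zpow {a b : ℕ} (ha : 0 < a) (hba : b ∣ a)
    (α : ℤ) :
    ∑ η ∈ (nthRoots a (1 : ℂ)).toFinset \ (nthRoots b (1 : ℂ)).toFinset, (1 - η ^ α) =
      (if (a : ℤ) ∣ α then 0 else (a : ℂ)) - (if (b : ℤ) ∣ α then 0 else (b : ℂ)) := by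
  have hb : 0 < b := Nat.pos_of_dvd_of_pos hba ha
  rw [sum_sdiff_eq_sub (nthRoots_one_toFinset_subset_of_dvd ha hba),
    (isPrimitiveRoot_exp a ha.ne').sum_nthRoots_one_one_sub_zpow,
    (isPrimitiveRoot_exp b hb.ne').sum_nthRoots_one_one_sub_zpow]

theorem Finset.sum_Icc_sub_mul_eq {R : Type*} [CommRing R] (c b : ℕ → R) (g : ℕ) :
    ∑ i ∈ Icc 1 g, (c (i - 1) - c i) * b i =
      c 0 * b 0 + ∑ i ∈ range g, c i * (b (i + 1) - b i) - c g * b g := by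
  induction g with
  | zero => simp
  | succ g ih =>
    rw [sum_Icc_succ_top (by omega), ih, sum_range_succ, Nat.add_sub_cancel]
    ring

theorem Finset.sum_Icc_sub_mul_eq_of_eq_zero_of_lt {R : Type*} [CommRing R] {c f b : ℕ → R}
    {k g : ℕ} (hkg : k < g) (hle : ∀ j ≤ k, c j = f j) (hgt : ∀ j, k < j → j ≤ g → c j = 0) :
    ∑ i ∈ Icc 1 g, (c (i - 1) - c i) * b i =
      f 0 * b 0 + ∑ i ∈ range (k + 1), f i * (b (i + 1) - b i) := by
  have htrunc : ∑ i ∈ range g, c i * (b (i + 1) - b i) =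
      ∑ i ∈ range (k + 1), f i * (b (i + 1) - b i) :=
    calc _ = ∑ i ∈ range (k + 1), c i * (b (i + 1) - b i) :=
          (sum_subset (range_subset_range.mpr hkg) fun i hi hik ↦ by
            rw [hgt i (by simp at hik; omega) (by simp at hi; omega), zero_mul]).symm
      _ = _ := sum_congr rfl fun i hi ↦ by rw [hle i (by simp at hi; omega)]
  rw [sum_Icc_sub_mul_eq, htrunc, hgt g hkg le_rfl, hle 0 k.zero_le, zero_mul, sub_zero]

theorem gcd_chain_dvd_of_le {e β : ℕ → ℕ} {g : ℕ}
    (he : ∀ i, 1 ≤ i → i ≤ g → e i = Nat.gcd (e (i - 1)) (β i)) {i j : ℕ} (hij : i ≤ j)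
    (hj : j ≤ g) : e j ∣ e i := by
  induction j, hij using Nat.le_induction with
  | base => exact dvd_rfl
  | succ j hij ih =>
    rw [he (j + 1) (by omega) hj, Nat.add_sub_cancel]
    exact (Nat.gcd_dvd_left _ _).trans (ih (by omega))

theorem mul_generator_succ_eq {e n v β : ℕ → ℕ} {g : ℕ}
    (hen : ∀ i, 1 ≤ i → i ≤ g → n i * e i = e (i - 1)) (hn0 : n 0 = 1)
    (hv : ∀ i < g, v (i + 1) = n i * v i + (β (i + 1) - β i)) {m : ℕ} (hm : m < g) :
    e m * v (m + 1) = e 0 * v 0 + ∑ i ∈ range (m + 1), e i * (β (i + 1) - β i) := by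
  induction m with
  | zero => rw [hv 0 hm, hn0, one_mul, mul_add, sum_range_one]
  | succ m ih =>
    rw [hv (m + 1) hm, sum_range_succ, ← add_assoc, ← ih (by omega), mul_add, ← mul_assoc,
      mul_comm (e _) (n _), hen (m + 1) (by omega) hm.le, Nat.add_sub_cancel]

theorem sum_S_eq_ek_vk_general (g : ℕ) (hg : 0 < g) (β e n v : ℕ → ℕ)
    (hβpos : 0 < β 0)
    (hβmono : ∀ i < g, β i < β (i + 1))
    (he0 : e 0 = β 0)
    (he : ∀ i, 1 ≤ i → i ≤ g → e i = Nat.gcd (e (i - 1)) (β i))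
    (hn : ∀ i, 1 ≤ i → i ≤ g → n i = e (i - 1) / e i)
    (hn0 : n 0 = 1)
    (hv0 : v 0 = β 0)
    (hv : ∀ i < g, v (i + 1) = n i * v i + (β (i + 1) - β i))
    (α : ℤ) (k : ℕ) (hk : k ≤ g - 1)
    (hknd : ¬ ((e k : ℤ) ∣ α))
    (hkmax : ∀ i, k < i → i ≤ g → (e i : ℤ) ∣ α) :
    ∑ i ∈ Finset.Icc 1 g,
        (∑ η ∈ (Polynomial.nthRoots (e (i - 1)) (1 : ℂ)).toFinset \
              (Polynomial.nthRoots (e i) (1 : ℂ)).toFinset, (1 - η ^ α)) * (β i : ℂ) =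
      (e k : ℂ) * (v (k + 1) : ℂ) ∧ (e k : ℂ) * (v (k + 1) : ℂ) ≠ 0 := by
  have hkg : k < g := by omega
  have hdvd {i j : ℕ} (hij : i ≤ j) (hj : j ≤ g) : e j ∣ e i := gcd_chain_dvd_of_le he hij hj
  have hepos {j : ℕ} (hj : j ≤ g) : 0 < e j :=
    Nat.pos_of_dvd_of_pos (hdvd j.zero_le hj) (he0 ▸ hβpos)
  have hen : ∀ i, 1 ≤ i → i ≤ g → n i * e i = e (i - 1) := fun i hi1 hig ↦ by
    rw [hn i hi1 hig, Nat.div_mul_cancel (hdvd (by omega) hig)]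
  have hgen : (e k * v (k + 1) : ℂ) =
      e 0 * β 0 + ∑ i ∈ range (k + 1), (e i : ℂ) * (β (i + 1) - β i) := by
    rw [sum_congr rfl fun i hi ↦ by
      rw [← Nat.cast_sub (hβmono i (by simp at hi; omega)).le], ← hv0]
    exact_mod_cast mul_generator_succ_eq hen hn0 hv hkg
  refine ⟨?_, ?_⟩
  · rw [sum_congr rfl fun i hi ↦ by
        rw [Complex.sum_sdiff_nthRoots_one_one_sub_zpow (hepos (by simp at hi; omega))
          (hdvd (by omega) (mem_Icc.mp hi).2)], hgen]
    exact sum_Icc_sub_mul_eq_of_eq_zero_of_lt (c := fun j ↦ if (e j : ℤ) ∣ α then 0 else (e j : ℂ))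
      hkg (fun j hj ↦ if_neg fun h ↦ hknd ((Int.natCast_dvd_natCast.mpr (hdvd hj hkg.le)).trans h))
      (fun j hkj hj ↦ if_pos (hkmax j hkj hj))
  · have hv_pos : 0 < v (k + 1) := by
      have := hβmono k hkg
      rw [hv k hkg]
      omega
    exact_mod_cast (Nat.mul_pos (hepos hkg.le) hv_pos).ne'

/-- The computation of `S` in Proposition 3.9 of the paper: with the characteristic
sequence `β 0 < β 1 < ⋯ < β g`, the gcd chain `e`, the quotients `n i = e (i-1) / e i`,
the semigroup generators `v`, and `k = max { i : e i ∤ α }`, one has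
`∑_{i=1}^{g} (∑_{η ∈ G_{i-1} \ G_i} (1 - η^α)) β_i = e_k v_{k+1} ≠ 0`. -/
theorem sum_S_eq_ek_vk (g : ℕ) (hg : 0 < g) (β e n v : ℕ → ℕ)
    (hβpos : 0 < β 0)
    (hβmono : ∀ i < g, β i < β (i + 1))
    (he0 : e 0 = β 0)
    (he : ∀ i, 1 ≤ i → i ≤ g → e i = Nat.gcd (e (i - 1)) (β i))
    (heg : e g = 1)
    (hn : ∀ i, 1 ≤ i → i ≤ g → n i = e (i - 1) / e i)
    (hn1 : ∀ i, 1 ≤ i → i ≤ g → 1 < n i)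
    (hn0 : n 0 = 1)
    (hv0 : v 0 = β 0)
    (hv : ∀ i < g, v (i + 1) = n i * v i + (β (i + 1) - β i))
    (α : ℤ) (k : ℕ) (hk : k ≤ g - 1)
    (hknd : ¬ ((e k : ℤ) ∣ α))
    (hkmax : ∀ i, k < i → i ≤ g → (e i : ℤ) ∣ α) :
    ∑ i ∈ Finset.Icc 1 g,
        (∑ η ∈ (Polynomial.nthRoots (e (i - 1)) (1 : ℂ)).toFinset \
              (Polynomial.nthRoots (e i) (1 : ℂ)).toFinset, (1 - η ^ α)) * (β i : ℂ) =
      (e k : ℂ) * (v (k + 1) : ℂ) ∧ (e k : ℂ) * (v (k + 1) : ℂ) ≠ 0 :=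
  sum_S_eq_ek_vk_general g hg β e n v hβpos hβmono he0 he hn hn0 hv0 hv α k hk hknd hkmax
end

section
/- Let v_0, …, v_g be positive integers with e_i = gcd(v_0, …, v_i), e_g = 1, n_i = e_{i-1}/e_i > 1, v_{i+1} > n_i v_i and n_i v_i ∈ ⟨v_0, …, v_{i-1}⟩ for all i. Then every integer r can be written uniquely as r = s_0 v_0 + Σ_{i=1}^{g} s_i v_i with s_0 ∈ ℤ and 0 ≤ s_i < n_i for 1 ≤ i ≤ g; moreover r belongs to the numerical semigroup Γ = ⟨v_0, …, v_g⟩ if and only if s_0 ≥ 0. -/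
/-- `r` is a nonnegative integer combination of `v 0, …, v m`. -/
def InGamma (g : ℕ) (v : ℕ → ℕ) (r : ℤ) : Prop :=
  ∃ c : ℕ → ℕ, r = ∑ i ∈ Finset.range (g + 1), (c i : ℤ) * (v i : ℤ)

/-!
Since `e i = gcd (e (i - 1), v i)`, the multiples `x v i` are periodic modulo `e (i - 1)` with
period exactly `n i = e (i - 1) / e i`, and they reach every class of multiples of `e i`.
So for `r` divisible by `e i` there is exactly one top digit `0 ≤ s i < n i` with
`e (i - 1) ∣ r - s i v i`, and induction on `i` (with `e g = 1`) gives existence and uniqueness.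
For membership, the top coefficient `c` of a nonnegative combination is split as
`c = q n i + ρ`; since `n i v i ∈ ⟨v 0, …, v (i - 1)⟩`, the part `q n i v i` moves down a level,
so every element of `Γ` has a standard representation with `s 0 ≥ 0`, and uniqueness does the rest.
-/

open Finset

theorem inGamma_add {m : ℕ} {v : ℕ → ℕ} {r₁ r₂ : ℤ} (h₁ : InGamma m v r₁) (h₂ : InGamma m v r₂) :
    InGamma m v (r₁ + r₂) := by
  obtain ⟨c, rfl⟩ := h₁
  obtain ⟨d, rfl⟩ := h₂
  refine ⟨c + d, ?_⟩
  simp only [Pi.add_apply, Nat.cast_add, add_mul, sum_add_distrib]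

theorem inGamma_natCast_mul {m : ℕ} {v : ℕ → ℕ} {r : ℤ} (q : ℕ) (h : InGamma m v r) :
    InGamma m v (q * r) := by
  obtain ⟨c, rfl⟩ := h
  refine ⟨q • c, ?_⟩
  simp only [mul_sum, Pi.smul_apply, smul_eq_mul, Nat.cast_mul, mul_assoc]

theorem exists_dvd_sub_mul_of_gcd_dvd {a b : ℕ} (ha : 0 < a) {r : ℤ}
    (hr : (Nat.gcd a b : ℤ) ∣ r) :
    ∃ x : ℤ, 0 ≤ x ∧ x < (a / Nat.gcd a b : ℕ) ∧ (a : ℤ) ∣ r - x * b := by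
  set d := Nat.gcd a b
  set N := a / d
  have hN : (0 : ℤ) < N := by exact_mod_cast Nat.div_gcd_pos_of_pos_left b ha
  obtain ⟨r', rfl⟩ := hr
  obtain ⟨w, hw⟩ := Nat.gcd_dvd_right a b
  have hNb : (N : ℤ) * b = a * w := by
    have hNd : (N : ℤ) * d = a := by exact_mod_cast Nat.div_mul_cancel (Nat.gcd_dvd_left a b)
    have hbw : (b : ℤ) = d * w := by exact_mod_cast hw
    linear_combination (N : ℤ) * hbw + (w : ℤ) * hNd
  -- Bézout: `d r' = a (r' A) + b (r' B)`, and `r' B` only matters modulo `N` since `a ∣ N b`.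
  refine ⟨r' * Nat.gcdB a b % N, Int.emod_nonneg _ hN.ne', Int.emod_lt_of_pos _ hN, ?_⟩
  refine ⟨r' * Nat.gcdA a b + w * (r' * Nat.gcdB a b / N), ?_⟩
  rw [Int.emod_def, Nat.gcd_eq_gcd_ab]
  linear_combination (r' * Nat.gcdB a b / N) * hNb

theorem eq_of_dvd_sub_mul {a b : ℕ} (ha : 0 < a) {x y : ℤ}
    (hx : 0 ≤ x ∧ x < (a / Nat.gcd a b : ℕ)) (hy : 0 ≤ y ∧ y < (a / Nat.gcd a b : ℕ))
    (h : (a : ℤ) ∣ (x - y) * b) : x = y := by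
  set d := Nat.gcd a b
  set N := a / d
  have hd : 0 < d := Nat.gcd_pos_of_pos_left b ha
  have hNd : (N : ℤ) ∣ (x - y) * (b / d : ℕ) := by
    have hab : ((N * d : ℕ) : ℤ) ∣ (x - y) * ((b / d * d : ℕ) : ℤ) := by
      rwa [Nat.div_mul_cancel (Nat.gcd_dvd_left a b), Nat.div_mul_cancel (Nat.gcd_dvd_right a b)]
    push_cast at hab
    rw [← mul_assoc] at hab
    exact (mul_dvd_mul_iff_right (by exact_mod_cast hd.ne')).mp hab
  have hcop : IsCoprime (N : ℤ) (b / d : ℕ) :=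
    Nat.isCoprime_iff_coprime.mpr (Nat.coprime_div_gcd_div_gcd hd)
  exact sub_eq_zero.mp <| Int.eq_zero_of_abs_lt_dvd (hcop.dvd_of_dvd_mul_right hNd)
    (abs_sub_lt_iff.mpr ⟨by linarith, by linarith⟩)

structure IsGcdChain (g : ℕ) (v e n : ℕ → ℕ) : Prop where
  v_zero_pos : 0 < v 0
  e_zero : e 0 = v 0
  e_succ : ∀ i < g, e (i + 1) = Nat.gcd (e i) (v (i + 1))
  n_succ : ∀ i < g, n (i + 1) = e i / e (i + 1)

def IsStandardDigits (n : ℕ → ℕ) (m : ℕ) (s : ℕ → ℤ) : Prop :=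
  ∀ i, 1 ≤ i → i ≤ m → 0 ≤ s i ∧ s i < n i

namespace IsStandardDigits

variable {n : ℕ → ℕ} {m : ℕ} {s : ℕ → ℤ}

theorem of_succ (hs : IsStandardDigits n (m + 1) s) : IsStandardDigits n m s :=
  fun i h₁ h₂ => hs i h₁ (by omega)

theorem zero (n : ℕ → ℕ) (s : ℕ → ℤ) : IsStandardDigits n 0 s :=
  fun i h₁ h₂ => by omega

theorem update (hs : IsStandardDigits n m s) {x : ℤ} (hx : 0 ≤ x ∧ x < n (m + 1)) :
    IsStandardDigits n (m + 1) (Function.update s (m + 1) x) := by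
  intro i h₁ h₂
  rcases (show i = m + 1 ∨ i ≤ m by omega) with rfl | hi
  · rwa [Function.update_self]
  · rw [Function.update_of_ne (by omega)]
    exact hs i h₁ hi

end IsStandardDigits

theorem sum_range_update_succ (v : ℕ → ℕ) (m : ℕ) (s : ℕ → ℤ) (x : ℤ) :
    ∑ i ∈ range (m + 2), Function.update s (m + 1) x i * (v i : ℤ) =
      ∑ i ∈ range (m + 1), s i * (v i : ℤ) + x * v (m + 1) := by
  rw [sum_range_succ, Function.update_self]
  congr 1
  refine sum_congr rfl fun i hi => ?_
  rw [Function.update_of_ne (by simp at hi; omega)]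

theorem inGamma_of_isStandardDigits {n v : ℕ → ℕ} {m : ℕ} {s : ℕ → ℤ}
    (hs : IsStandardDigits n m s) (hs₀ : 0 ≤ s 0) :
    InGamma m v (∑ i ∈ range (m + 1), s i * (v i : ℤ)) := by
  refine ⟨fun i => (s i).toNat, sum_congr rfl fun i hi => ?_⟩
  rw [Int.toNat_of_nonneg]
  rcases Nat.eq_zero_or_pos i with rfl | hi₀
  · exact hs₀
  · exact (hs i hi₀ (mem_range_succ_iff.mp hi)).1

namespace IsGcdChain

variable {g : ℕ} {v e n : ℕ → ℕ}

theorem e_pos (h : IsGcdChain g v e n) : ∀ i ≤ g, 0 < e i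
  | 0, _ => h.e_zero ▸ h.v_zero_pos
  | i + 1, hi => h.e_succ i hi ▸ Nat.gcd_pos_of_pos_left _ (h.e_pos i (by omega))

theorem e_dvd_v (h : IsGcdChain g v e n) {m : ℕ} (hm : m ≤ g) : ∀ j ≤ m, e m ∣ v j := by
  induction m with
  | zero => intro j hj; rw [Nat.le_zero.mp hj, h.e_zero]
  | succ m ih =>
    intro j hj
    rw [h.e_succ m hm]
    rcases (show j = m + 1 ∨ j ≤ m by omega) with rfl | hj
    · exact Nat.gcd_dvd_right _ _
    · exact (Nat.gcd_dvd_left _ _).trans (ih (by omega) j hj)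

theorem e_dvd_sum (h : IsGcdChain g v e n) {m : ℕ} (hm : m ≤ g) (s : ℕ → ℤ) :
    (e m : ℤ) ∣ ∑ i ∈ range (m + 1), s i * (v i : ℤ) :=
  dvd_sum fun i hi => dvd_mul_of_dvd_right
    (Int.natCast_dvd_natCast.mpr (h.e_dvd_v hm i (mem_range_succ_iff.mp hi))) _

theorem n_succ_pos (h : IsGcdChain g v e n) {m : ℕ} (hm : m < g) : 0 < n (m + 1) := by
  rw [h.n_succ m hm, h.e_succ m hm]
  exact Nat.div_gcd_pos_of_pos_left _ (h.e_pos m hm.le)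

theorem digits_unique (h : IsGcdChain g v e n) {m : ℕ} (hm : m ≤ g) {s t : ℕ → ℤ}
    (hs : IsStandardDigits n m s) (ht : IsStandardDigits n m t)
    (hst : ∑ i ∈ range (m + 1), s i * (v i : ℤ) = ∑ i ∈ range (m + 1), t i * (v i : ℤ)) :
    ∀ i ≤ m, s i = t i := by
  induction m with
  | zero =>
    intro i hi
    rw [Nat.le_zero.mp hi]
    simp only [zero_add, sum_range_one] at hst
    exact mul_right_cancel₀ (by exact_mod_cast h.v_zero_pos.ne') hst
  | succ m ih =>
    rw [sum_range_succ, sum_range_succ (fun i => t i * (v i : ℤ))] at hst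
    have htop : s (m + 1) = t (m + 1) := by
      have hdvd : (e m : ℤ) ∣ (s (m + 1) - t (m + 1)) * v (m + 1) := by
        have hdiff : (s (m + 1) - t (m + 1)) * v (m + 1) =
            ∑ i ∈ range (m + 1), t i * (v i : ℤ) - ∑ i ∈ range (m + 1), s i * (v i : ℤ) := by
          linear_combination hst
        rw [hdiff]
        exact dvd_sub (h.e_dvd_sum (by omega) t) (h.e_dvd_sum (by omega) s)
      have hbound (u : ℕ → ℤ) (hu : IsStandardDigits n (m + 1) u) :
          0 ≤ u (m + 1) ∧ u (m + 1) < (e m / Nat.gcd (e m) (v (m + 1)) : ℕ) := by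
        rw [← h.e_succ m hm, ← h.n_succ m hm]
        exact hu (m + 1) (by omega) le_rfl
      exact eq_of_dvd_sub_mul (h.e_pos m (by omega)) (hbound s hs) (hbound t ht) hdvd
    intro i hi
    rcases (show i = m + 1 ∨ i ≤ m by omega) with rfl | hi
    · exact htop
    · exact ih (by omega) hs.of_succ ht.of_succ (by rw [htop] at hst; linarith) i hi

theorem exists_digits (h : IsGcdChain g v e n) {m : ℕ} (hm : m ≤ g) {r : ℤ}
    (hr : (e m : ℤ) ∣ r) :
    ∃ s, IsStandardDigits n m s ∧ r = ∑ i ∈ range (m + 1), s i * (v i : ℤ) := by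
  induction m generalizing r with
  | zero =>
    refine ⟨fun _ => r / v 0, IsStandardDigits.zero n _, ?_⟩
    rw [h.e_zero] at hr
    rw [zero_add, sum_range_one, Int.ediv_mul_cancel hr]
  | succ m ih =>
    rw [h.e_succ m hm] at hr
    obtain ⟨x, hx₀, hxn, hdvd⟩ := exists_dvd_sub_mul_of_gcd_dvd (h.e_pos m (by omega)) hr
    obtain ⟨s, hs, hsum⟩ := ih (by omega) hdvd
    refine ⟨Function.update s (m + 1) x, hs.update ⟨hx₀, ?_⟩, ?_⟩
    · rwa [h.n_succ m hm, h.e_succ m hm]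
    · rw [sum_range_update_succ, ← hsum]
      ring

theorem exists_digits_of_inGamma (h : IsGcdChain g v e n)
    (hmem : ∀ i < g, InGamma i v (n (i + 1) * v (i + 1))) {m : ℕ} (hm : m ≤ g) {r : ℤ}
    (hr : InGamma m v r) :
    ∃ s, IsStandardDigits n m s ∧ 0 ≤ s 0 ∧ r = ∑ i ∈ range (m + 1), s i * (v i : ℤ) := by
  induction m generalizing r with
  | zero =>
    obtain ⟨c, rfl⟩ := hr
    exact ⟨fun _ => c 0, IsStandardDigits.zero n _, by positivity, by simp⟩
  | succ m ih =>
    obtain ⟨c, rfl⟩ := hr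
    set N := n (m + 1)
    set q := c (m + 1) / N
    set ρ := c (m + 1) % N
    have hlow : InGamma m v
        (∑ i ∈ range (m + 1), (c i : ℤ) * v i + q * (N * v (m + 1))) :=
      inGamma_add ⟨c, rfl⟩ (inGamma_natCast_mul q (hmem m hm))
    obtain ⟨s, hs, hs₀, hsum⟩ := ih (by omega) hlow
    refine ⟨Function.update s (m + 1) ρ, hs.update ⟨by positivity, ?_⟩, ?_, ?_⟩
    · exact_mod_cast Nat.mod_lt _ (h.n_succ_pos hm)
    · rwa [Function.update_of_ne (by omega)]
    · have hc : (c (m + 1) : ℤ) = N * q + ρ := by exact_mod_cast (Nat.div_add_mod _ _).symm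
      rw [sum_range_update_succ, ← hsum, sum_range_succ, hc]
      ring

theorem inGamma_iff (h : IsGcdChain g v e n)
    (hmem : ∀ i < g, InGamma i v (n (i + 1) * v (i + 1))) {m : ℕ} (hm : m ≤ g)
    {s : ℕ → ℤ} (hs : IsStandardDigits n m s) :
    InGamma m v (∑ i ∈ range (m + 1), s i * (v i : ℤ)) ↔ 0 ≤ s 0 := by
  refine ⟨fun hΓ => ?_, inGamma_of_isStandardDigits hs⟩
  obtain ⟨t, ht, ht₀, hsum⟩ := h.exists_digits_of_inGamma hmem hm hΓ
  rwa [h.digits_unique hm hs ht hsum 0 (Nat.zero_le m)]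

end IsGcdChain

theorem standard_representation_general (g : ℕ) (v e n : ℕ → ℕ)
    (hvpos : ∀ i ≤ g, 0 < v i)
    (he0 : e 0 = v 0)
    (he : ∀ i, 1 ≤ i → i ≤ g → e i = Nat.gcd (e (i - 1)) (v i))
    (heg : e g = 1)
    (hn : ∀ i, 1 ≤ i → i ≤ g → n i = e (i - 1) / e i)
    (hmem : ∀ i, 1 ≤ i → i ≤ g → InGamma (i - 1) v ((n i : ℤ) * (v i : ℤ)))
    (r : ℤ) :
    (∃ s : ℕ → ℤ, (∀ i, 1 ≤ i → i ≤ g → 0 ≤ s i ∧ s i < n i) ∧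
        r = ∑ i ∈ Finset.range (g + 1), s i * (v i : ℤ) ∧
        (InGamma g v r ↔ 0 ≤ s 0)) ∧
    (∀ s t : ℕ → ℤ,
        (∀ i, 1 ≤ i → i ≤ g → 0 ≤ s i ∧ s i < n i) →
        (∀ i, 1 ≤ i → i ≤ g → 0 ≤ t i ∧ t i < n i) →
        r = ∑ i ∈ Finset.range (g + 1), s i * (v i : ℤ) →
        r = ∑ i ∈ Finset.range (g + 1), t i * (v i : ℤ) →
        ∀ i ≤ g, s i = t i) := by
  have h : IsGcdChain g v e n :=
    ⟨hvpos 0 (Nat.zero_le g), he0, fun i hi => he (i + 1) (by omega) hi,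
      fun i hi => hn (i + 1) (by omega) hi⟩
  have hmem' : ∀ i < g, InGamma i v (n (i + 1) * v (i + 1)) :=
    fun i hi => hmem (i + 1) (by omega) hi
  obtain ⟨s, hs, hr⟩ := h.exists_digits le_rfl (heg ▸ one_dvd r : (e g : ℤ) ∣ r)
  refine ⟨⟨s, hs, hr, hr ▸ h.inGamma_iff hmem' le_rfl hs⟩, ?_⟩
  intro s t hs ht hrs hrt
  exact h.digits_unique le_rfl hs ht (hrs.symm.trans hrt)

/-- Standard representation with respect to a strongly increasing numerical semigroup:
every integer `r` is uniquely `r = s_0 v_0 + ∑_{i=1}^{g} s_i v_i` with `0 ≤ s_i < n_i`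
for `1 ≤ i ≤ g` and `s_0 ∈ ℤ`; and `r ∈ Γ = ⟨v_0, …, v_g⟩` iff `s_0 ≥ 0`. -/
theorem standard_representation (g : ℕ) (v e n : ℕ → ℕ)
    (hvpos : ∀ i ≤ g, 0 < v i)
    (he0 : e 0 = v 0)
    (he : ∀ i, 1 ≤ i → i ≤ g → e i = Nat.gcd (e (i - 1)) (v i))
    (heg : e g = 1)
    (hn : ∀ i, 1 ≤ i → i ≤ g → n i = e (i - 1) / e i)
    (hn1 : ∀ i, 1 ≤ i → i ≤ g → 1 < n i)
    (hn0 : n 0 = 1)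
    (hinc : ∀ i < g, n i * v i < v (i + 1))
    (hmem : ∀ i, 1 ≤ i → i ≤ g → InGamma (i - 1) v ((n i : ℤ) * (v i : ℤ)))
    (r : ℤ) :
    (∃ s : ℕ → ℤ, (∀ i, 1 ≤ i → i ≤ g → 0 ≤ s i ∧ s i < n i) ∧
        r = ∑ i ∈ Finset.range (g + 1), s i * (v i : ℤ) ∧
        (InGamma g v r ↔ 0 ≤ s 0)) ∧
    (∀ s t : ℕ → ℤ,
        (∀ i, 1 ≤ i → i ≤ g → 0 ≤ s i ∧ s i < n i) →
        (∀ i, 1 ≤ i → i ≤ g → 0 ≤ t i ∧ t i < n i) →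
        r = ∑ i ∈ Finset.range (g + 1), s i * (v i : ℤ) →
        r = ∑ i ∈ Finset.range (g + 1), t i * (v i : ℤ) →
        ∀ i ≤ g, s i = t i) :=
  standard_representation_general g v e n hvpos he0 he heg hn hmem r
end

section
/- Let v_0, …, v_g and n_i, e_i be as in the strongly-increasing semigroup setup (e_i = gcd(v_0,…,v_i), e_g = 1, n_i = e_{i-1}/e_i > 1, v_{i+1} > n_i v_i, n_i v_i ∈ ⟨v_0,…,v_{i-1}⟩). Suppose s_1, …, s_g are integers with 0 ≤ s_i < n_i for all i, and suppose that for every k with 0 ≤ k ≤ g − 1 the integer e_k divides α := Σ_{i=1}^{g} (n_i − 1 − s_i) v_i. Then s_i = n_i − 1 for every 1 ≤ i ≤ g. -/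
/-!
Suppose some `s_i ≠ n_i - 1` and let `i` be the largest such index. Then
`α = ∑_{j ≤ i} c_j v_j` with `c_j = n_j - 1 - s_j`, and since `e_{i-1}` divides `v_j` for
`j < i`, it divides `c_i v_i`. As `e_{i-1} = n_i e_i` with `n_i` coprime to `v_i / e_i`, this
forces `n_i ∣ c_i`, impossible for `0 < c_i < n_i`.
-/

/-- `r` is a nonnegative integer combination of `v 0, …, v (m-1)`. -/
def InSemi (v : ℕ → ℕ) (m : ℕ) (r : ℕ) : Prop :=
  ∃ c : ℕ → ℕ, r = ∑ j ∈ Finset.range m, c j * v j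

open Finset

theorem dvd_of_le_of_forall_succ_dvd {α : Type*} [Monoid α] {e : ℕ → α} {g : ℕ}
    (h : ∀ k < g, e (k + 1) ∣ e k) {j k : ℕ} (hjk : j ≤ k) (hk : k ≤ g) : e k ∣ e j := by
  induction hjk with
  | refl => rfl
  | step _ ih => exact (h _ hk).trans (ih (by omega))

theorem Int.natCast_div_gcd_dvd_of_dvd_mul {E V : ℕ} {c : ℤ} (hE : E ≠ 0)
    (h : (E : ℤ) ∣ c * V) : ((E / E.gcd V : ℕ) : ℤ) ∣ c := by
  set d := E.gcd V
  have hd : (d : ℤ) ≠ 0 := by exact_mod_cast Nat.gcd_ne_zero_left hE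
  have hcop : IsCoprime ((E / d : ℕ) : ℤ) ((V / d : ℕ) : ℤ) :=
    Nat.isCoprime_iff_coprime.mpr (Nat.coprime_div_gcd_div_gcd (Nat.gcd_pos_of_pos_left _
      (Nat.pos_of_ne_zero hE)))
  have hE' : (E : ℤ) = (E / d : ℕ) * d := by
    exact_mod_cast (Nat.div_mul_cancel (Nat.gcd_dvd_left E V)).symm
  have hV' : (V : ℤ) = (V / d : ℕ) * d := by
    exact_mod_cast (Nat.div_mul_cancel (Nat.gcd_dvd_right E V)).symm
  rw [hE', hV', ← mul_assoc, mul_dvd_mul_iff_right hd] at h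
  exact hcop.dvd_of_dvd_mul_right h

def IsRunningGcd (g : ℕ) (v e : ℕ → ℕ) : Prop :=
  ∀ i, 1 ≤ i → i ≤ g → e i = Nat.gcd (e (i - 1)) (v i)

namespace IsRunningGcd

variable {g : ℕ} {v e : ℕ → ℕ}

theorem succ_dvd (he : IsRunningGcd g v e) {k : ℕ} (hk : k < g) : e (k + 1) ∣ e k := by
  simpa [he (k + 1) (by omega) hk] using Nat.gcd_dvd_left (e k) (v (k + 1))

theorem dvd_of_le (he : IsRunningGcd g v e) {j k : ℕ} (hj : 1 ≤ j) (hjk : j ≤ k) (hk : k ≤ g) :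
    e k ∣ v j :=
  (dvd_of_le_of_forall_succ_dvd (fun _ => he.succ_dvd) hjk hk).trans
    (he j hj (hjk.trans hk) ▸ Nat.gcd_dvd_right _ _)

theorem dvd_mul_of_dvd_sum (he : IsRunningGcd g v e) {k : ℕ} (hk : k < g) (c : ℕ → ℤ)
    (h : (e k : ℤ) ∣ ∑ j ∈ Icc 1 (k + 1), c j * v j) : (e k : ℤ) ∣ c (k + 1) * v (k + 1) := by
  rw [sum_Icc_succ_top (by omega)] at h
  refine (dvd_add_right (dvd_sum fun j hj => dvd_mul_of_dvd_right ?_ _)).mp h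
  obtain ⟨hj1, hjk⟩ := mem_Icc.mp hj
  exact Int.natCast_dvd_natCast.mpr (he.dvd_of_le hj1 hjk hk.le)

end IsRunningGcd

theorem all_si_eq_general (g : ℕ) (v e n : ℕ → ℕ)
    (he : ∀ i, 1 ≤ i → i ≤ g → e i = Nat.gcd (e (i - 1)) (v i))
    (hn : ∀ i, 1 ≤ i → i ≤ g → n i = e (i - 1) / e i)
    (s : ℕ → ℤ)
    (hs : ∀ i, 1 ≤ i → i ≤ g → 0 ≤ s i ∧ s i < n i)
    (hdvd : ∀ k < g, (e k : ℤ) ∣ ∑ i ∈ Finset.Icc 1 g, ((n i : ℤ) - 1 - s i) * (v i : ℤ)) :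
    ∀ i, 1 ≤ i → i ≤ g → s i = (n i : ℤ) - 1 := by
  set c : ℕ → ℤ := fun i => (n i : ℤ) - 1 - s i
  by_contra! ⟨i₀, hi₀, hi₀g, hsi₀⟩
  obtain ⟨i, hi, hmax⟩ := ((Icc 1 g).filter (c · ≠ 0)).exists_max_image id
    ⟨i₀, by simp only [mem_filter, mem_Icc, c]; omega⟩
  simp only [mem_filter, mem_Icc, id] at hi hmax
  obtain ⟨k, rfl⟩ : ∃ k, i = k + 1 := ⟨i - 1, by omega⟩
  have hsum : ∑ j ∈ Icc 1 g, c j * v j = ∑ j ∈ Icc 1 (k + 1), c j * v j := by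
    refine (sum_subset (Icc_subset_Icc_right hi.1.2) fun j hj hjk => ?_).symm
    simp only [mem_Icc] at hj hjk
    have : c j = 0 := by_contra fun h => by have := hmax j ⟨hj, h⟩; omega
    simp [this]
  have htop : (e k : ℤ) ∣ c (k + 1) * v (k + 1) :=
    IsRunningGcd.dvd_mul_of_dvd_sum he hi.1.2 c (hsum ▸ hdvd k hi.1.2)
  have hnk : n (k + 1) = e k / (e k).gcd (v (k + 1)) :=
    he (k + 1) (by omega) hi.1.2 ▸ hn (k + 1) (by omega) hi.1.2
  obtain ⟨hs0, hsn⟩ := hs (k + 1) (by omega) hi.1.2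
  have hek : e k ≠ 0 := fun h => by
    simp only [hnk, h, Nat.zero_div, Nat.cast_zero] at hsn
    omega
  have hc_dvd : (n (k + 1) : ℤ) ∣ c (k + 1) := hnk ▸ Int.natCast_div_gcd_dvd_of_dvd_mul hek htop
  exact hi.2 (Int.eq_zero_of_dvd_of_nonneg_of_lt (by simp only [c]; omega)
    (by simp only [c]; omega) hc_dvd)

/-- Numerical core of Lemma 4.4 of the paper: if `0 ≤ s_i < n_i` and every `e_k`
(`0 ≤ k ≤ g−1`) divides `α = ∑_{i=1}^{g} (n_i − 1 − s_i) v_i`, then `s_i = n_i − 1`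
for all `1 ≤ i ≤ g`. -/
theorem all_si_eq (g : ℕ) (v e n : ℕ → ℕ)
    (hvpos : ∀ i ≤ g, 0 < v i)
    (he0 : e 0 = v 0)
    (he : ∀ i, 1 ≤ i → i ≤ g → e i = Nat.gcd (e (i - 1)) (v i))
    (heg : e g = 1)
    (hn : ∀ i, 1 ≤ i → i ≤ g → n i = e (i - 1) / e i)
    (hn1 : ∀ i, 1 ≤ i → i ≤ g → 1 < n i)
    (hn0 : n 0 = 1)
    (hinc : ∀ i < g, n i * v i < v (i + 1))
    (hmem : ∀ i, 1 ≤ i → i ≤ g → InSemi v i (n i * v i))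
    (s : ℕ → ℤ)
    (hs : ∀ i, 1 ≤ i → i ≤ g → 0 ≤ s i ∧ s i < n i)
    (hdvd : ∀ k < g, (e k : ℤ) ∣ ∑ i ∈ Finset.Icc 1 g, ((n i : ℤ) - 1 - s i) * (v i : ℤ)) :
    ∀ i, 1 ≤ i → i ≤ g → s i = (n i : ℤ) - 1 :=
  all_si_eq_general g v e n he hn s hs hdvd
end

section
/- Let Γ = ⟨v_0, …, v_g⟩ be a strongly-increasing numerical semigroup as above (e_i = gcd(v_0,…,v_i), e_g = 1, n_i = e_{i-1}/e_i > 1, v_{i+1} > n_i v_i, n_i v_i ∈ ⟨v_0,…,v_{i-1}⟩) and set μ = Σ_{i=1}^{g}(n_i − 1)v_i − v_0 + 1. Then μ is the conductor of Γ: μ − 1 ∉ Γ, and every integer ≥ μ belongs to Γ. -/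
open Finset

def gcdUpTo (v : ℕ → ℕ) (k : ℕ) : ℕ := (range (k + 1)).gcd v

def lincomb (v : ℕ → ℕ) (k : ℕ) (a : ℕ → ℤ) : ℤ := ∑ i ∈ range (k + 1), a i * v i

def IsStandard (n : ℕ → ℕ) (k : ℕ) (a : ℕ → ℤ) : Prop :=
  ∀ i, 1 ≤ i → i ≤ k → 0 ≤ a i ∧ a i < n i

/-- The standard coefficients of the Frobenius number `μ - 1`. -/
def frobeniusCoeffs (n : ℕ → ℕ) (i : ℕ) : ℤ := if i = 0 then -1 else n i - 1

section gcdUpTo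

variable {v : ℕ → ℕ}

theorem gcdUpTo_zero : gcdUpTo v 0 = v 0 := by
  simp [gcdUpTo]

theorem gcdUpTo_succ (k : ℕ) : gcdUpTo v (k + 1) = Nat.gcd (gcdUpTo v k) (v (k + 1)) := by
  rw [gcdUpTo, range_add_one, gcd_insert, Nat.gcd_comm]
  rfl

theorem gcdUpTo_dvd {i k : ℕ} (h : i ≤ k) : gcdUpTo v k ∣ v i :=
  Finset.gcd_dvd (mem_range.mpr (Nat.lt_succ_of_le h))

theorem gcdUpTo_succ_dvd (k : ℕ) : gcdUpTo v (k + 1) ∣ gcdUpTo v k := by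
  rw [gcdUpTo_succ]
  exact Nat.gcd_dvd_left _ _

theorem gcdUpTo_pos (hv0 : 0 < v 0) (k : ℕ) : 0 < gcdUpTo v k :=
  Nat.pos_of_dvd_of_pos (gcdUpTo_dvd (Nat.zero_le k)) hv0

theorem exists_gcdUpTo_succ_eq (k : ℕ) :
    ∃ x y : ℤ, (gcdUpTo v (k + 1) : ℤ) = x * gcdUpTo v k + y * v (k + 1) :=
  ⟨Nat.gcdA _ (v (k + 1)), Nat.gcdB (gcdUpTo v k) _, by rw [gcdUpTo_succ, Nat.gcd_eq_gcd_ab]; ring⟩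

theorem eq_gcdUpTo_of_chain {g : ℕ} {e : ℕ → ℕ} (he0 : e 0 = v 0)
    (he : ∀ i, 1 ≤ i → i ≤ g → e i = Nat.gcd (e (i - 1)) (v i)) :
    ∀ i ≤ g, e i = gcdUpTo v i := by
  intro i hi
  induction i with
  | zero => rw [he0, gcdUpTo_zero]
  | succ i ih => rw [he (i + 1) (by omega) hi, Nat.add_sub_cancel, ih (by omega), gcdUpTo_succ]

theorem gcdUpTo_dvd_lincomb (k : ℕ) (a : ℕ → ℤ) : (gcdUpTo v k : ℤ) ∣ lincomb v k a :=
  dvd_sum fun _ hi =>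
    (Int.natCast_dvd_natCast.mpr (gcdUpTo_dvd (Nat.le_of_lt_succ (mem_range.mp hi)))).mul_left _

end gcdUpTo

section lincomb

variable {v : ℕ → ℕ}

theorem lincomb_succ (k : ℕ) (a : ℕ → ℤ) :
    lincomb v (k + 1) a = lincomb v k a + a (k + 1) * v (k + 1) :=
  sum_range_succ _ _

theorem lincomb_update_succ (k : ℕ) (a : ℕ → ℤ) (t : ℤ) :
    lincomb v (k + 1) (Function.update a (k + 1) t) = lincomb v k a + t * v (k + 1) := by
  rw [lincomb_succ, Function.update_self]
  congr 1
  refine sum_congr rfl fun i hi => ?_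
  rw [Function.update_of_ne (by simp at hi; omega)]

end lincomb

section standard

variable {v n : ℕ → ℕ} {k : ℕ} {a b : ℕ → ℤ}

theorem IsStandard.mono {j : ℕ} (ha : IsStandard n k a) (hjk : j ≤ k) : IsStandard n j a :=
  fun i h1 h2 => ha i h1 (h2.trans hjk)

theorem IsStandard.update {t : ℤ} (ha : IsStandard n k a) (ht : 0 ≤ t ∧ t < n (k + 1)) :
    IsStandard n (k + 1) (Function.update a (k + 1) t) := by
  intro i h1 h2
  rcases Nat.lt_or_eq_of_le h2 with h | rfl
  · rw [Function.update_of_ne (by omega)]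
    exact ha i h1 (by omega)
  · rwa [Function.update_self]

theorem gcdUpTo_dvd_mul_succ {N : ℕ} (h : gcdUpTo v k = N * gcdUpTo v (k + 1)) :
    (gcdUpTo v k : ℤ) ∣ N * v (k + 1) := by
  obtain ⟨w, hw⟩ := gcdUpTo_dvd (v := v) (le_refl (k + 1))
  exact ⟨w, by rw [h, hw]; push_cast; ring⟩

theorem exists_coeff_gcdUpTo_dvd_sub {N : ℕ} (hN : 0 < N)
    (h : gcdUpTo v k = N * gcdUpTo v (k + 1)) {r : ℤ} (hr : (gcdUpTo v (k + 1) : ℤ) ∣ r) :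
    ∃ t : ℤ, (0 ≤ t ∧ t < N) ∧ (gcdUpTo v k : ℤ) ∣ r - t * v (k + 1) := by
  obtain ⟨s, rfl⟩ := hr
  obtain ⟨x, y, hxy⟩ := exists_gcdUpTo_succ_eq (v := v) k
  refine ⟨s * y % N, ⟨Int.emod_nonneg _ (by omega), Int.emod_lt_of_pos _ (by omega)⟩, ?_⟩
  have hsplit : gcdUpTo v (k + 1) * s - s * y % N * v (k + 1) =
      s * x * gcdUpTo v k + s * y / N * (N * v (k + 1)) := by
    linear_combination s * hxy - (v (k + 1) : ℤ) * Int.emod_add_mul_ediv (s * y) N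
  rw [hsplit]
  exact dvd_add (dvd_mul_left _ _) ((gcdUpTo_dvd_mul_succ h).mul_left _)

theorem dvd_of_gcdUpTo_dvd_mul {N : ℕ} (hv0 : 0 < v 0) (h : gcdUpTo v k = N * gcdUpTo v (k + 1))
    {d : ℤ} (hd : (gcdUpTo v k : ℤ) ∣ d * v (k + 1)) : (N : ℤ) ∣ d := by
  obtain ⟨x, y, hxy⟩ := exists_gcdUpTo_succ_eq (v := v) k
  have hdvd : (gcdUpTo v k : ℤ) ∣ d * gcdUpTo v (k + 1) := by
    rw [hxy, show d * (x * gcdUpTo v k + y * v (k + 1)) = d * x * gcdUpTo v k + y * (d * v (k + 1))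
      by ring]
    exact dvd_add (dvd_mul_left _ _) (hd.mul_left _)
  rw [h, Nat.cast_mul] at hdvd
  exact Int.dvd_of_mul_dvd_mul_right (by exact_mod_cast (gcdUpTo_pos hv0 (k + 1)).ne') hdvd

theorem exists_isStandard_lincomb_eq (hn : ∀ i, 1 ≤ i → i ≤ k → 0 < n i)
    (hstep : ∀ i < k, gcdUpTo v i = n (i + 1) * gcdUpTo v (i + 1)) {r : ℤ}
    (hr : (gcdUpTo v k : ℤ) ∣ r) : ∃ a, IsStandard n k a ∧ lincomb v k a = r := by
  induction k generalizing r with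
  | zero =>
    obtain ⟨s, rfl⟩ := hr
    exact ⟨fun _ => s, fun i h1 h2 => by omega, by simp [lincomb, gcdUpTo_zero, mul_comm]⟩
  | succ k ih =>
    obtain ⟨t, ht, hdvd⟩ :=
      exists_coeff_gcdUpTo_dvd_sub (hn (k + 1) (by omega) le_rfl) (hstep k (by omega)) hr
    obtain ⟨a, ha, hsum⟩ :=
      ih (fun i h1 h2 => hn i h1 (by omega)) (fun i hi => hstep i (by omega)) hdvd
    exact ⟨_, ha.update ht, by rw [lincomb_update_succ, hsum]; ring⟩

theorem IsStandard.eq_of_lincomb_eq (hv0 : 0 < v 0)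
    (hstep : ∀ i < k, gcdUpTo v i = n (i + 1) * gcdUpTo v (i + 1))
    (ha : IsStandard n k a) (hb : IsStandard n k b) (h : lincomb v k a = lincomb v k b) :
    ∀ i ≤ k, a i = b i := by
  induction k with
  | zero =>
    intro i hi
    obtain rfl : i = 0 := by omega
    simpa [lincomb, hv0.ne'] using h
  | succ k ih =>
    rw [lincomb_succ, lincomb_succ] at h
    have htop : a (k + 1) = b (k + 1) := by
      have hdvd : (n (k + 1) : ℤ) ∣ a (k + 1) - b (k + 1) := by
        refine dvd_of_gcdUpTo_dvd_mul hv0 (hstep k (by omega)) ?_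
        rw [show (a (k + 1) - b (k + 1)) * v (k + 1) = lincomb v k b - lincomb v k a by linarith]
        exact dvd_sub (gcdUpTo_dvd_lincomb _ _) (gcdUpTo_dvd_lincomb _ _)
      have ha' := ha (k + 1) (by omega) le_rfl
      have hb' := hb (k + 1) (by omega) le_rfl
      have := Int.eq_zero_of_abs_lt_dvd hdvd (abs_sub_lt_iff.mpr ⟨by omega, by omega⟩)
      omega
    have hlow := ih (fun i hi => hstep i (by omega)) (ha.mono k.le_succ) (hb.mono k.le_succ)
      (by rw [htop] at h; linarith)
    intro i hi
    rcases Nat.lt_or_eq_of_le hi with hi | rfl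
    · exact hlow i (by omega)
    · exact htop

end standard

section semigroup

variable {v n : ℕ → ℕ} {k : ℕ} {r s : ℤ}

theorem InGamma.add (hr : InGamma k v r) (hs : InGamma k v s) : InGamma k v (r + s) := by
  obtain ⟨c, rfl⟩ := hr
  obtain ⟨d, rfl⟩ := hs
  exact ⟨c + d, by simp only [Pi.add_apply, Nat.cast_add, add_mul, sum_add_distrib]⟩

theorem InGamma.nat_mul (m : ℕ) (hr : InGamma k v r) : InGamma k v (m * r) := by
  obtain ⟨c, rfl⟩ := hr
  exact ⟨fun i => m * c i, by simp only [mul_sum, Nat.cast_mul, mul_assoc]⟩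

theorem InGamma.exists_succ (hr : InGamma (k + 1) v r) :
    ∃ r₀ : ℤ, ∃ c : ℕ, InGamma k v r₀ ∧ r = r₀ + c * v (k + 1) := by
  obtain ⟨c, rfl⟩ := hr
  exact ⟨_, c (k + 1), ⟨c, rfl⟩, sum_range_succ _ _⟩

theorem inGamma_lincomb_of_nonneg {a : ℕ → ℤ} (ha : ∀ i ≤ k, 0 ≤ a i) :
    InGamma k v (lincomb v k a) :=
  ⟨fun i => (a i).toNat, sum_congr rfl fun i hi => by
    rw [Int.toNat_of_nonneg (ha i (Nat.le_of_lt_succ (mem_range.mp hi)))]⟩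

theorem InGamma.exists_isStandard (hn : ∀ i, 1 ≤ i → i ≤ k → 0 < n i)
    (hmem : ∀ i < k, InGamma i v (n (i + 1) * v (i + 1))) (hr : InGamma k v r) :
    ∃ a, IsStandard n k a ∧ 0 ≤ a 0 ∧ lincomb v k a = r := by
  induction k generalizing r with
  | zero =>
    obtain ⟨c, rfl⟩ := hr
    exact ⟨fun i => c i, fun i h1 h2 => by omega, by positivity, rfl⟩
  | succ k ih =>
    obtain ⟨r₀, c, hr₀, rfl⟩ := hr.exists_succ
    have hN : 0 < n (k + 1) := hn (k + 1) (by omega) le_rfl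
    -- `c / n (k + 1)` copies of `n (k + 1) * v (k + 1) ∈ Γ_k` are carried to the lower generators.
    have hcarry : InGamma k v (r₀ + (c / n (k + 1) : ℕ) * (n (k + 1) * v (k + 1))) :=
      hr₀.add ((hmem k (by omega)).nat_mul _)
    obtain ⟨a, ha, ha0, hsum⟩ :=
      ih (fun i h1 h2 => hn i h1 (by omega)) (fun i hi => hmem i (by omega)) hcarry
    refine ⟨Function.update a (k + 1) (c % n (k + 1) : ℕ),
      ha.update ⟨by positivity, by exact_mod_cast Nat.mod_lt c hN⟩,
      by rwa [Function.update_of_ne (by omega)], ?_⟩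
    rw [lincomb_update_succ, hsum]
    conv_rhs => rw [← Nat.div_add_mod c (n (k + 1))]
    push_cast
    ring

theorem isStandard_frobeniusCoeffs (hn : ∀ i, 1 ≤ i → i ≤ k → 0 < n i) :
    IsStandard n k (frobeniusCoeffs n) := by
  intro i h1 h2
  have := hn i h1 h2
  rw [frobeniusCoeffs, if_neg (show i ≠ 0 by omega)]
  omega

theorem IsStandard.nonneg_of_lincomb_frobeniusCoeffs_lt {a : ℕ → ℤ} (ha : IsStandard n k a)
    (h : lincomb v k (frobeniusCoeffs n) < lincomb v k a) : ∀ i ≤ k, 0 ≤ a i := by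
  intro i hi
  rcases Nat.eq_zero_or_pos i with rfl | hi0
  · by_contra! ha0
    refine h.not_ge (sum_le_sum fun j hj => mul_le_mul_of_nonneg_right ?_ (by positivity))
    rcases Nat.eq_zero_or_pos j with rfl | hj0
    · rw [frobeniusCoeffs, if_pos rfl]
      omega
    · rw [frobeniusCoeffs, if_neg hj0.ne']
      have := ha j hj0 (Nat.le_of_lt_succ (mem_range.mp hj))
      omega
  · exact (ha i hi0 hi).1

theorem lincomb_frobeniusCoeffs (g : ℕ) :
    lincomb v g (frobeniusCoeffs n) = ∑ i ∈ Icc 1 g, ((n i : ℤ) - 1) * v i - v 0 := by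
  rw [lincomb, range_eq_Ico, sum_eq_sum_Ico_succ_bot (by omega), zero_add,
    Ico_add_one_right_eq_Icc, frobeniusCoeffs, if_pos rfl, neg_one_mul, neg_add_eq_sub]
  refine congrArg (· - _) (sum_congr rfl fun i hi => ?_)
  rw [frobeniusCoeffs, if_neg (by simp at hi; omega)]

end semigroup

theorem milnor_is_conductor_general (g : ℕ) (v e n : ℕ → ℕ)
    (hvpos : ∀ i ≤ g, 0 < v i)
    (he0 : e 0 = v 0)
    (he : ∀ i, 1 ≤ i → i ≤ g → e i = Nat.gcd (e (i - 1)) (v i))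
    (heg : e g = 1)
    (hn : ∀ i, 1 ≤ i → i ≤ g → n i = e (i - 1) / e i)
    (hn1 : ∀ i, 1 ≤ i → i ≤ g → 1 < n i)
    (hmem : ∀ i, 1 ≤ i → i ≤ g → InGamma (i - 1) v ((n i : ℤ) * (v i : ℤ)))
    (μ : ℤ)
    (hμ : μ = (∑ i ∈ Finset.Icc 1 g, ((n i : ℤ) - 1) * (v i : ℤ)) - (v 0 : ℤ) + 1) :
    ¬ InGamma g v (μ - 1) ∧ ∀ r : ℤ, μ ≤ r → InGamma g v r := by
  have hgcd := eq_gcdUpTo_of_chain he0 he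
  have hstep : ∀ i < g, gcdUpTo v i = n (i + 1) * gcdUpTo v (i + 1) := fun i hi => by
    rw [hn (i + 1) (by omega) hi, Nat.add_sub_cancel, hgcd i hi.le, hgcd (i + 1) hi,
      Nat.div_mul_cancel (gcdUpTo_succ_dvd i)]
  have hnpos : ∀ i, 1 ≤ i → i ≤ g → 0 < n i := fun i h1 h2 => (hn1 i h1 h2).le
  have hfrob : lincomb v g (frobeniusCoeffs n) = μ - 1 := by
    rw [lincomb_frobeniusCoeffs, hμ]
    ring
  refine ⟨fun hμ1 => ?_, fun r hr => ?_⟩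
  · obtain ⟨a, ha, ha0, hsum⟩ :=
      hμ1.exists_isStandard hnpos fun i hi => by simpa using hmem (i + 1) (by omega) hi
    have ha0_eq := ha.eq_of_lincomb_eq (hvpos 0 g.zero_le) hstep (isStandard_frobeniusCoeffs hnpos)
      (hsum.trans hfrob.symm) 0 g.zero_le
    rw [frobeniusCoeffs, if_pos rfl] at ha0_eq
    omega
  · have hdvd : (gcdUpTo v g : ℤ) ∣ r := by simp [← hgcd g le_rfl, heg]
    obtain ⟨a, ha, rfl⟩ := exists_isStandard_lincomb_eq hnpos hstep hdvd
    exact inGamma_lincomb_of_nonneg (ha.nonneg_of_lincomb_frobeniusCoeffs_lt (v := v) (by omega))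

/-- `μ = ∑_{i=1}^{g} (n_i − 1) v_i − v_0 + 1` is the conductor of the strongly
increasing numerical semigroup `Γ = ⟨v_0, …, v_g⟩`: `μ − 1 ∉ Γ` and every
integer `≥ μ` belongs to `Γ`. -/
theorem milnor_is_conductor (g : ℕ) (v e n : ℕ → ℕ)
    (hvpos : ∀ i ≤ g, 0 < v i)
    (he0 : e 0 = v 0)
    (he : ∀ i, 1 ≤ i → i ≤ g → e i = Nat.gcd (e (i - 1)) (v i))
    (heg : e g = 1)
    (hn : ∀ i, 1 ≤ i → i ≤ g → n i = e (i - 1) / e i)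
    (hn1 : ∀ i, 1 ≤ i → i ≤ g → 1 < n i)
    (hn0 : n 0 = 1)
    (hinc : ∀ i < g, n i * v i < v (i + 1))
    (hmem : ∀ i, 1 ≤ i → i ≤ g → InGamma (i - 1) v ((n i : ℤ) * (v i : ℤ)))
    (μ : ℤ)
    (hμ : μ = (∑ i ∈ Finset.Icc 1 g, ((n i : ℤ) - 1) * (v i : ℤ)) - (v 0 : ℤ) + 1) :
    ¬ InGamma g v (μ - 1) ∧ ∀ r : ℤ, μ ≤ r → InGamma g v r :=
  milnor_is_conductor_general g v e n hvpos he0 he heg hn hn1 hmem μ hμ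
end

section
/- Let Γ = ⟨v_0, …, v_g⟩ be a strongly-increasing numerical semigroup as above with conductor μ = Σ_{i=1}^{g}(n_i − 1)v_i − v_0 + 1. Then Γ is symmetric: for every integer r, r ∈ Γ if and only if μ − 1 − r ∉ Γ. Consequently, the number of gaps satisfies #(ℕ \ Γ) = μ/2. -/
open Finset

lemma Finset.sum_range_succ_eq_add_sum_Icc {M : Type*} [AddCommMonoid M] (k : ℕ) (f : ℕ → M) :
    ∑ i ∈ range (k + 1), f i = f 0 + ∑ i ∈ Icc 1 k, f i := by
  rw [range_eq_Ico, Ico_add_one_right_eq_Icc, ← insert_Icc_add_one_left_eq_Icc (Nat.zero_le k),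
    sum_insert (by simp), zero_add]

namespace Nat.Coprime

theorem exists_lt_intCast_dvd_sub_mul {a b : ℕ} (ha : 0 < a) (hab : a.Coprime b) (q : ℤ) :
    ∃ c < a, (a : ℤ) ∣ q - c * b := by
  obtain ⟨x, y, hxy⟩ := Nat.isCoprime_iff_coprime.mpr hab
  have hmod : 0 ≤ q * y % a := Int.emod_nonneg _ (by omega)
  refine ⟨(q * y % a).toNat, (Int.toNat_lt hmod).mpr (Int.emod_lt_of_pos _ (by omega)), ?_⟩
  rw [Int.toNat_of_nonneg hmod]
  have hyb : q * y * b ≡ q [ZMOD a] :=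
    (Int.modEq_iff_dvd.mpr ⟨q * x, by linear_combination (-q) * hxy⟩)
  exact (((Int.mod_modEq _ _).mul_right _).trans hyb).dvd

theorem eq_of_intCast_dvd_sub_mul {a b c c' : ℕ} (hab : a.Coprime b) (hc : c < a) (hc' : c' < a)
    (h : (a : ℤ) ∣ ((c : ℤ) - c') * b) : c = c' := by
  have hdvd := (Nat.isCoprime_iff_coprime.mpr hab).dvd_of_dvd_mul_right h
  have := Int.eq_zero_of_abs_lt_dvd hdvd (abs_lt.mpr ⟨by omega, by omega⟩)
  omega

end Nat.Coprime

namespace Nat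

theorem intCast_eq_div_mul_of_dvd {a d : ℕ} (h : d ∣ a) : (a : ℤ) = ((a / d : ℕ) : ℤ) * d := by
  norm_cast
  exact (Nat.div_mul_cancel h).symm

theorem exists_lt_div_gcd_intCast_dvd_sub_mul {a b : ℕ} (ha : 0 < a) {r : ℤ}
    (hr : (a.gcd b : ℤ) ∣ r) : ∃ c < a / a.gcd b, (a : ℤ) ∣ r - c * b := by
  have hd : 0 < a.gcd b := Nat.gcd_pos_of_pos_left b ha
  obtain ⟨q, rfl⟩ := hr
  obtain ⟨c, hc, hdvd⟩ := (coprime_div_gcd_div_gcd hd).exists_lt_intCast_dvd_sub_mul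
    (Nat.div_pos (Nat.gcd_le_left b ha) hd) q
  refine ⟨c, hc, ?_⟩
  rw [intCast_eq_div_mul_of_dvd (gcd_dvd_left a b), intCast_eq_div_mul_of_dvd (gcd_dvd_right a b)]
  exact (mul_dvd_mul_right hdvd _).trans (dvd_of_eq (by ring))

theorem eq_of_lt_div_gcd_of_intCast_dvd_sub_mul {a b c c' : ℕ} (hc : c < a / a.gcd b)
    (hc' : c' < a / a.gcd b) (h : (a : ℤ) ∣ ((c : ℤ) - c') * b) : c = c' := by
  have hd : 0 < a.gcd b := Nat.pos_of_ne_zero fun h0 => by simp_all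
  refine (coprime_div_gcd_div_gcd hd).eq_of_intCast_dvd_sub_mul hc hc' ?_
  rw [intCast_eq_div_mul_of_dvd (gcd_dvd_left a b), intCast_eq_div_mul_of_dvd (gcd_dvd_right a b),
    ← mul_assoc] at h
  exact Int.dvd_of_mul_dvd_mul_right (by exact_mod_cast hd.ne') h

end Nat

structure IsPartialGcdSeq (g : ℕ) (v e n : ℕ → ℕ) : Prop where
  zero : e 0 = v 0
  succ : ∀ i < g, e (i + 1) = (e i).gcd (v (i + 1))
  last : e g = 1
  quot : ∀ i < g, n (i + 1) = e i / e (i + 1)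
  one_lt_quot : ∀ i < g, 1 < n (i + 1)

def IsStandardRep (k : ℕ) (v n : ℕ → ℕ) (r c₀ : ℤ) (c : ℕ → ℕ) : Prop :=
  (∀ i ∈ Icc 1 k, c i < n i) ∧ r = c₀ * v 0 + ∑ i ∈ Icc 1 k, (c i : ℤ) * v i

section StandardRep

variable {k : ℕ} {v n : ℕ → ℕ} {r c₀ : ℤ} {c : ℕ → ℕ}

theorem InGamma.nonneg (hr : InGamma k v r) : 0 ≤ r := by
  obtain ⟨c, rfl⟩ := hr
  positivity

theorem InGamma.add_s14 {a b : ℤ} (ha : InGamma k v a) (hb : InGamma k v b) : InGamma k v (a + b) := by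
  obtain ⟨c, rfl⟩ := ha
  obtain ⟨d, rfl⟩ := hb
  exact ⟨c + d, by rw [← sum_add_distrib]; push_cast [Pi.add_apply, add_mul]; rfl⟩

theorem InGamma.natCast_mul {a : ℤ} (q : ℕ) (ha : InGamma k v a) : InGamma k v (q * a) := by
  obtain ⟨c, rfl⟩ := ha
  exact ⟨q • c, by rw [mul_sum]; push_cast [Pi.smul_apply, smul_eq_mul, mul_assoc]; rfl⟩

theorem IsStandardRep.inGamma (hrep : IsStandardRep k v n r c₀ c) (hc₀ : 0 ≤ c₀) :
    InGamma k v r := by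
  refine ⟨Function.update c 0 c₀.toNat, ?_⟩
  rw [sum_range_succ_eq_add_sum_Icc, Function.update_self, Int.toNat_of_nonneg hc₀,
    sum_congr rfl fun i hi => by rw [Function.update_of_ne (by simp at hi; omega)]]
  exact hrep.2

theorem IsStandardRep.reflect (hrep : IsStandardRep k v n r c₀ c) :
    IsStandardRep k v n (∑ i ∈ Icc 1 k, ((n i : ℤ) - 1) * v i - v 0 - r) (-c₀ - 1)
      (fun i => n i - 1 - c i) := by
  obtain ⟨hlt, rfl⟩ := hrep
  refine ⟨fun i hi => by have := hlt i hi; dsimp only; omega, ?_⟩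
  have hcast : ∀ i ∈ Icc 1 k,
      ((n i - 1 - c i : ℕ) : ℤ) * v i = ((n i : ℤ) - 1) * v i - c i * v i :=
    fun i hi => by have := hlt i hi; rw [← sub_mul]; congr 1; omega
  rw [sum_congr rfl hcast, sum_sub_distrib]
  ring

theorem IsStandardRep.extend {a : ℕ} (hrep : IsStandardRep k v n r c₀ c) (ha : a < n (k + 1)) :
    IsStandardRep (k + 1) v n (r + a * v (k + 1)) c₀ (Function.update c (k + 1) a) := by
  obtain ⟨hlt, rfl⟩ := hrep
  refine ⟨fun i hi => ?_, ?_⟩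
  · rcases eq_or_ne i (k + 1) with rfl | hik
    · simpa using ha
    · rw [Function.update_of_ne hik]
      exact hlt i (by simp at hi ⊢; omega)
  · have hlow : ∀ i ∈ Icc 1 k, (Function.update c (k + 1) a i : ℤ) * v i = c i * v i :=
      fun i hi => by rw [Function.update_of_ne (by simp at hi; omega)]
    rw [sum_Icc_succ_top (by omega), Function.update_self, sum_congr rfl hlow]
    ring

theorem InGamma.exists_isStandardRep (hn : ∀ i < k, 0 < n (i + 1))
    (hmem : ∀ i < k, InGamma i v (n (i + 1) * v (i + 1))) (hr : InGamma k v r) :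
    ∃ c₀ : ℕ, ∃ c, IsStandardRep k v n r c₀ c := by
  induction k generalizing r with
  | zero =>
    obtain ⟨c, rfl⟩ := hr
    exact ⟨c 0, c, by simp, by simp⟩
  | succ k ih =>
    obtain ⟨d, rfl⟩ := hr
    have hdiv : (d (k + 1) : ℤ) =
        n (k + 1) * (d (k + 1) / n (k + 1) : ℕ) + (d (k + 1) % n (k + 1) : ℕ) := by
      exact_mod_cast (Nat.div_add_mod _ _).symm
    have hlow : InGamma k v (∑ i ∈ range (k + 1), (d i : ℤ) * v i
        + (d (k + 1) / n (k + 1) : ℕ) * (n (k + 1) * v (k + 1))) :=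
      InGamma.add_s14 ⟨d, rfl⟩ ((hmem k k.lt_succ_self).natCast_mul _)
    obtain ⟨c₀, c, hrep⟩ := ih (fun i hi => hn i (by omega)) (fun i hi => hmem i (by omega)) hlow
    refine ⟨c₀, Function.update c (k + 1) (d (k + 1) % n (k + 1)), ?_⟩
    convert hrep.extend (Nat.mod_lt _ (hn k k.lt_succ_self)) using 1
    rw [sum_range_succ, hdiv]
    ring

end StandardRep

namespace IsPartialGcdSeq

variable {g : ℕ} {v e n : ℕ → ℕ}

theorem dvd_of_le (h : IsPartialGcdSeq g v e n) {i j : ℕ} (hji : j ≤ i) (hi : i ≤ g) :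
    e i ∣ e j := by
  induction i, hji using Nat.le_induction with
  | base => rfl
  | succ i _ ih =>
    rw [h.succ i (by omega)]
    exact (Nat.gcd_dvd_left _ _).trans (ih (by omega))

theorem dvd_v_of_le (h : IsPartialGcdSeq g v e n) {i j : ℕ} (hji : j ≤ i) (hi : i ≤ g) :
    e i ∣ v j := by
  refine (h.dvd_of_le hji hi).trans ?_
  cases j with
  | zero => rw [h.zero]
  | succ j =>
    rw [h.succ j (by omega)]
    exact Nat.gcd_dvd_right _ _

theorem pos (h : IsPartialGcdSeq g v e n) {i : ℕ} (hi : i ≤ g) : 0 < e i := by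
  rcases hi.eq_or_lt with rfl | hi
  · rw [h.last]
    exact one_pos
  · have := h.one_lt_quot i hi
    rw [h.quot i hi] at this
    exact Nat.pos_of_ne_zero fun h0 => by simp [h0] at this

theorem quot_eq_div_gcd (h : IsPartialGcdSeq g v e n) {i : ℕ} (hi : i < g) :
    n (i + 1) = e i / (e i).gcd (v (i + 1)) := by
  rw [h.quot i hi, h.succ i hi]

theorem exists_isStandardRep_of_dvd (h : IsPartialGcdSeq g v e n) {k : ℕ} (hk : k ≤ g) {r : ℤ}
    (hr : (e k : ℤ) ∣ r) : ∃ c₀ c, IsStandardRep k v n r c₀ c := by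
  induction k generalizing r with
  | zero =>
    obtain ⟨c₀, rfl⟩ := hr
    exact ⟨c₀, 0, by simp, by rw [h.zero]; simp [mul_comm]⟩
  | succ k ih =>
    rw [h.succ k hk] at hr
    obtain ⟨a, ha, hdvd⟩ := Nat.exists_lt_div_gcd_intCast_dvd_sub_mul (h.pos (by omega)) hr
    obtain ⟨c₀, c, hrep⟩ := ih (by omega) hdvd
    rw [← h.quot_eq_div_gcd hk] at ha
    exact ⟨c₀, _, by simpa using hrep.extend ha⟩

theorem intCast_dvd_mul_add_sum (h : IsPartialGcdSeq g v e n) {k : ℕ} (hk : k ≤ g) (c₀ : ℤ)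
    (c : ℕ → ℕ) : (e k : ℤ) ∣ c₀ * v 0 + ∑ i ∈ Icc 1 k, (c i : ℤ) * v i := by
  have hdvd : ∀ j ≤ k, (e k : ℤ) ∣ v j :=
    fun j hj => Int.natCast_dvd_natCast.mpr (h.dvd_v_of_le hj hk)
  exact dvd_add (dvd_mul_of_dvd_right (hdvd 0 k.zero_le) _)
    (dvd_sum fun i hi => dvd_mul_of_dvd_right (hdvd i (mem_Icc.mp hi).2) _)

theorem eq_of_isStandardRep (h : IsPartialGcdSeq g v e n) {k : ℕ} (hk : k ≤ g) {r c₀ d₀ : ℤ}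
    {c d : ℕ → ℕ} (hc : IsStandardRep k v n r c₀ c) (hd : IsStandardRep k v n r d₀ d) :
    c₀ = d₀ := by
  induction k generalizing r with
  | zero =>
    obtain ⟨-, rfl⟩ := hc
    obtain ⟨-, hd⟩ := hd
    have hv : v 0 ≠ 0 := h.zero ▸ (h.pos hk).ne'
    simpa [hv] using hd
  | succ k ih =>
    obtain ⟨hc, rfl⟩ := hc
    obtain ⟨hd, heq⟩ := hd
    rw [sum_Icc_succ_top (by omega), sum_Icc_succ_top (by omega)] at heq
    have hlt : ∀ {c : ℕ → ℕ}, (∀ i ∈ Icc 1 (k + 1), c i < n i) →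
        c (k + 1) < e k / (e k).gcd (v (k + 1)) :=
      fun hc => h.quot_eq_div_gcd hk ▸ hc (k + 1) (by simp)
    have htop : c (k + 1) = d (k + 1) := by
      refine Nat.eq_of_lt_div_gcd_of_intCast_dvd_sub_mul (hlt hc) (hlt hd) ?_
      have hdiff : ((c (k + 1) : ℤ) - d (k + 1)) * v (k + 1) =
          (d₀ * v 0 + ∑ i ∈ Icc 1 k, (d i : ℤ) * v i) -
            (c₀ * v 0 + ∑ i ∈ Icc 1 k, (c i : ℤ) * v i) := by
        linear_combination heq
      rw [hdiff]
      exact dvd_sub (h.intCast_dvd_mul_add_sum (by omega) d₀ d)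
        (h.intCast_dvd_mul_add_sum (by omega) c₀ c)
    rw [htop] at heq
    have hsub : Icc 1 k ⊆ Icc 1 (k + 1) := Icc_subset_Icc_right k.le_succ
    exact ih (by omega) ⟨fun i hi => hc i (hsub hi), rfl⟩
      ⟨fun i hi => hd i (hsub hi), by linear_combination heq⟩

theorem inGamma_iff (h : IsPartialGcdSeq g v e n)
    (hmem : ∀ i < g, InGamma i v (n (i + 1) * v (i + 1))) {r c₀ : ℤ} {c : ℕ → ℕ}
    (hrep : IsStandardRep g v n r c₀ c) : InGamma g v r ↔ 0 ≤ c₀ := by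
  refine ⟨fun hr => ?_, hrep.inGamma⟩
  obtain ⟨d₀, d, hd⟩ :=
    hr.exists_isStandardRep (fun i hi => (h.one_lt_quot i hi).le.trans_lt' one_pos) hmem
  rw [h.eq_of_isStandardRep le_rfl hrep hd]
  positivity

end IsPartialGcdSeq

theorem two_mul_ncard_setOf_not_eq_of_symmetric {P : ℤ → Prop} {F : ℤ}
    (hP : ∀ r, P r → 0 ≤ r) (hsym : ∀ r, P r ↔ ¬ P (F - r)) :
    2 * ({m : ℕ | ¬ P m}.ncard : ℤ) = F + 1 := by
  classical
  obtain ⟨N, hN⟩ : ∃ N : ℕ, F + 1 = N := by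
    have hF : P (F + 1) := by
      rw [hsym, show F - (F + 1) = -1 by ring]
      exact fun h => by simpa using hP _ h
    exact ⟨(F + 1).toNat, (Int.toNat_of_nonneg (hP _ hF)).symm⟩
  have hgaps : {m : ℕ | ¬ P m} = ↑((range N).filter (fun m : ℕ => ¬ P m)) := by
    ext m
    simp only [Set.mem_ofPred_eq, coe_filter, mem_range, iff_and_self]
    intro hm
    have := hP _ (not_not.mp ((not_congr (hsym m)).mp hm))
    omega
  have hreflect :
      #((range N).filter (fun m : ℕ => ¬ P m)) = #((range N).filter (fun m : ℕ => P m)) := by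
    rw [card_filter, card_filter, ← sum_range_reflect (fun m => if ¬ P m then 1 else 0)]
    refine sum_congr rfl fun m hm => ?_
    have hcast : ((N - 1 - m : ℕ) : ℤ) = F - m := by
      have := mem_range.mp hm
      omega
    simp only [hcast, hsym m]
  have hsplit := card_filter_add_card_filter_not (s := range N) (fun m : ℕ => P m)
  rw [card_range] at hsplit
  rw [hgaps, Set.ncard_coe_finset]
  omega

theorem gamma_symmetric_general (g : ℕ) (v e n : ℕ → ℕ)
    (he0 : e 0 = v 0)
    (he : ∀ i, 1 ≤ i → i ≤ g → e i = Nat.gcd (e (i - 1)) (v i))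
    (heg : e g = 1)
    (hn : ∀ i, 1 ≤ i → i ≤ g → n i = e (i - 1) / e i)
    (hn1 : ∀ i, 1 ≤ i → i ≤ g → 1 < n i)
    (hmem : ∀ i, 1 ≤ i → i ≤ g → InGamma (i - 1) v ((n i : ℤ) * (v i : ℤ)))
    (μ : ℤ)
    (hμ : μ = (∑ i ∈ Finset.Icc 1 g, ((n i : ℤ) - 1) * (v i : ℤ)) - (v 0 : ℤ) + 1) :
    (∀ r : ℤ, InGamma g v r ↔ ¬ InGamma g v (μ - 1 - r)) ∧
    2 * ({m : ℕ | ¬ InGamma g v (m : ℤ)}.ncard : ℤ) = μ := by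
  have hseq : IsPartialGcdSeq g v e n :=
    { zero := he0
      succ := fun i hi => he (i + 1) (by omega) hi
      last := heg
      quot := fun i hi => hn (i + 1) (by omega) hi
      one_lt_quot := fun i hi => hn1 (i + 1) (by omega) hi }
  have hmem' : ∀ i < g, InGamma i v (n (i + 1) * v (i + 1)) :=
    fun i hi => hmem (i + 1) (by omega) hi
  have hsym : ∀ r : ℤ, InGamma g v r ↔ ¬ InGamma g v (μ - 1 - r) := by
    intro r
    obtain ⟨c₀, c, hrep⟩ := hseq.exists_isStandardRep_of_dvd le_rfl (r := r) (by simp [heg])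
    have hrep' := hrep.reflect
    rw [show ∑ i ∈ Icc 1 g, ((n i : ℤ) - 1) * v i - v 0 - r = μ - 1 - r by rw [hμ]; ring] at hrep'
    rw [hseq.inGamma_iff hmem' hrep, hseq.inGamma_iff hmem' hrep']
    omega
  refine ⟨hsym, ?_⟩
  have := two_mul_ncard_setOf_not_eq_of_symmetric (fun r hr => hr.nonneg) hsym
  linarith

/-- A strongly increasing numerical semigroup `Γ = ⟨v_0, …, v_g⟩` with conductor
`μ = ∑ (n_i − 1) v_i − v_0 + 1` is symmetric: `r ∈ Γ ↔ μ − 1 − r ∉ Γ`;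
consequently the number of gaps is `μ / 2`. -/
theorem gamma_symmetric (g : ℕ) (v e n : ℕ → ℕ)
    (hvpos : ∀ i ≤ g, 0 < v i)
    (he0 : e 0 = v 0)
    (he : ∀ i, 1 ≤ i → i ≤ g → e i = Nat.gcd (e (i - 1)) (v i))
    (heg : e g = 1)
    (hn : ∀ i, 1 ≤ i → i ≤ g → n i = e (i - 1) / e i)
    (hn1 : ∀ i, 1 ≤ i → i ≤ g → 1 < n i)
    (hn0 : n 0 = 1)
    (hinc : ∀ i < g, n i * v i < v (i + 1))
    (hmem : ∀ i, 1 ≤ i → i ≤ g → InGamma (i - 1) v ((n i : ℤ) * (v i : ℤ)))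
    (μ : ℤ)
    (hμ : μ = (∑ i ∈ Finset.Icc 1 g, ((n i : ℤ) - 1) * (v i : ℤ)) - (v 0 : ℤ) + 1) :
    (∀ r : ℤ, InGamma g v r ↔ ¬ InGamma g v (μ - 1 - r)) ∧
    2 * ({m : ℕ | ¬ InGamma g v (m : ℤ)}.ncard : ℤ) = μ :=
  gamma_symmetric_general g v e n he0 he heg hn hn1 hmem μ hμ
end

section
/- Let Γ = ⟨v_0, …, v_g⟩ be a strongly-increasing numerical semigroup as above, 0 ≤ k < g, Γ_k = ⟨v_0/e_k, …, v_k/e_k⟩, and let δ be a nonnegative integer with δ ∉ Γ_k. Then for any integers s_{k+1}, …, s_g with 0 ≤ s_i < n_i for k+1 < i ≤ g and 1 ≤ s_{k+1} < n_{k+1}, the integer Σ_{i=k+1}^{g} s_i v_i + e_k δ does not belong to Γ. -/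
section Aux

variable (g : ℕ) (v e n : ℕ → ℕ)

lemma aux_e_dvd_e (he : ∀ i, 1 ≤ i → i ≤ g → e i = Nat.gcd (e (i - 1)) (v i)) :
    ∀ j ≤ g, ∀ i ≤ j, e j ∣ e i := by
  intro j hj
  induction j with
  | zero => intro i hi; have : i = 0 := by omega
            subst this; exact dvd_rfl
  | succ m ih =>
    intro i hi
    rcases Nat.lt_or_ge i (m+1) with h | h
    · have h1 : e (m+1) ∣ e m := by
        rw [he (m+1) (by omega) hj]; exact Nat.gcd_dvd_left _ _
      exact h1.trans (ih (by omega) i (by omega))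
    · have : i = m + 1 := by omega
      subst this; exact dvd_rfl

lemma aux_e_dvd_v (he0 : e 0 = v 0)
    (he : ∀ i, 1 ≤ i → i ≤ g → e i = Nat.gcd (e (i - 1)) (v i)) :
    ∀ j ≤ g, ∀ i ≤ j, e j ∣ v i := by
  intro j hj i hi
  have h := aux_e_dvd_e g v e he j hj i hi
  rcases Nat.eq_zero_or_pos i with rfl | hpos
  · rwa [he0] at h
  · refine h.trans ?_
    rw [he i (by omega) (by omega)]; exact Nat.gcd_dvd_right _ _

lemma aux_e_pos (hvpos : ∀ i ≤ g, 0 < v i) (he0 : e 0 = v 0)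
    (he : ∀ i, 1 ≤ i → i ≤ g → e i = Nat.gcd (e (i - 1)) (v i)) :
    ∀ j ≤ g, 0 < e j := by
  intro j hj
  have := aux_e_dvd_v g v e he0 he j hj 0 (by omega)
  exact Nat.pos_of_dvd_of_pos this (hvpos 0 (by omega))

/-- Existence of a standard representation with integer leading coefficient,
for any integer divisible by `e j`. -/
lemma aux_exE (hvpos : ∀ i ≤ g, 0 < v i) (he0 : e 0 = v 0)
    (he : ∀ i, 1 ≤ i → i ≤ g → e i = Nat.gcd (e (i - 1)) (v i))
    (hn : ∀ i, 1 ≤ i → i ≤ g → n i = e (i - 1) / e i)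
    (hn1 : ∀ i, 1 ≤ i → i ≤ g → 1 < n i) :
    ∀ j ≤ g, ∀ x : ℤ, (e j : ℤ) ∣ x →
      ∃ (a : ℤ) (t : ℕ → ℕ), (∀ i, 1 ≤ i → i ≤ j → t i < n i) ∧
        x = a * v 0 + ∑ i ∈ Finset.Icc 1 j, (t i : ℤ) * v i := by
  intro j
  induction j with
  | zero =>
    intro _ x hdvd
    rw [he0] at hdvd
    refine ⟨x / (v 0 : ℤ), fun _ => 0, by omega, ?_⟩
    simp [Int.ediv_mul_cancel hdvd]
  | succ j ih =>
    intro hj x hdvd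
    have hj' : j ≤ g := by omega
    -- Bezout: x = a0 * e j + b0 * v (j+1)
    have hgcd : (e (j+1) : ℤ) = Int.gcd (e j : ℤ) (v (j+1) : ℤ) := by
      rw [he (j+1) (by omega) hj]
      simp [Int.gcd_natCast_natCast]
    obtain ⟨c, hc⟩ := hdvd
    set E : ℤ := (e j : ℤ)
    set V : ℤ := (v (j+1) : ℤ)
    have hbez : (Int.gcd E V : ℤ) = E * Int.gcdA E V + V * Int.gcdB E V :=
      Int.gcd_eq_gcd_ab E V
    have hx : x = (c * Int.gcdA E V) * E + (c * Int.gcdB E V) * V := by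
      rw [hc, hgcd, hbez]; ring
    set b0 : ℤ := c * Int.gcdB E V
    set N : ℤ := (n (j+1) : ℤ)
    have hNpos : 0 < N := by
      have := hn1 (j+1) (by omega) hj
      simp only [N]; exact_mod_cast by omega
    set r : ℤ := b0 % N
    have hr0 : 0 ≤ r := Int.emod_nonneg _ (by omega)
    have hrN : r < N := Int.emod_lt_of_pos _ hNpos
    have hb0 : b0 = N * (b0 / N) + r := (Int.mul_ediv_add_emod b0 N).symm
    -- e j divides n (j+1) * v (j+1)
    have hdvdNV : E ∣ N * V := by
      have h1 : n (j+1) * e (j+1) = e j := by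
        rw [hn (j+1) (by omega) hj]
        refine Nat.div_mul_cancel ?_
        rw [he (j+1) (by omega) hj]; exact Nat.gcd_dvd_left _ _
      have h2 : e (j+1) ∣ v (j+1) := by
        rw [he (j+1) (by omega) hj]; exact Nat.gcd_dvd_right _ _
      have h3 : e j ∣ n (j+1) * v (j+1) := by
        obtain ⟨w, hw⟩ := h2
        exact ⟨w, by rw [hw, ← h1]; ring⟩
      show ((e j : ℤ)) ∣ (n (j+1) : ℤ) * (v (j+1) : ℤ)
      exact_mod_cast Int.natCast_dvd_natCast.mpr h3
    have hdvd' : E ∣ x - r * V := by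
      have : x - r * V = (c * Int.gcdA E V) * E + (b0 / N) * (N * V) := by
        rw [hx]; nth_rewrite 1 [hb0]; ring
      rw [this]
      exact dvd_add ⟨c * Int.gcdA E V, by ring⟩ (Dvd.dvd.mul_left hdvdNV _)
    obtain ⟨a, t, hbound, heq⟩ := ih hj' (x - r * V) hdvd'
    refine ⟨a, fun i => if i = j + 1 then r.toNat else t i, ?_, ?_⟩
    · intro i h1 h2
      by_cases hij : i = j + 1
      · subst hij
        show (if j + 1 = j + 1 then r.toNat else t (j + 1)) < n (j + 1)
        rw [if_pos rfl]
        have h := hrN; have h0 := hr0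
        simp only [N, r] at h h0 ⊢
        omega
      · simp only [if_neg hij]
        exact hbound i h1 (by omega)
    · rw [Finset.sum_Icc_succ_top (by omega)]
      simp only [if_true]
      rw [Int.toNat_of_nonneg hr0]
      have hsum : ∑ i ∈ Finset.Icc 1 j, ((if i = j + 1 then r.toNat else t i : ℕ) : ℤ) * v i
          = ∑ i ∈ Finset.Icc 1 j, (t i : ℤ) * v i := by
        refine Finset.sum_congr rfl fun i hi => ?_
        have : i ≠ j + 1 := by simp at hi; omega
        simp [this]
      rw [hsum]
      have := heq
      push_cast at this ⊢
      linarith [this]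

/-- Uniqueness of the standard representation with integer leading
coefficient. -/
lemma aux_uniq (hvpos : ∀ i ≤ g, 0 < v i) (he0 : e 0 = v 0)
    (he : ∀ i, 1 ≤ i → i ≤ g → e i = Nat.gcd (e (i - 1)) (v i))
    (hn : ∀ i, 1 ≤ i → i ≤ g → n i = e (i - 1) / e i) :
    ∀ j ≤ g, ∀ (a b : ℤ) (t u : ℕ → ℕ),
      (∀ i, 1 ≤ i → i ≤ j → t i < n i) → (∀ i, 1 ≤ i → i ≤ j → u i < n i) →
      a * v 0 + ∑ i ∈ Finset.Icc 1 j, (t i : ℤ) * v i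
        = b * v 0 + ∑ i ∈ Finset.Icc 1 j, (u i : ℤ) * v i →
      a = b ∧ ∀ i, 1 ≤ i → i ≤ j → t i = u i := by
  intro j
  induction j with
  | zero =>
    intro _ a b t u _ _ heq
    have hv0 : ((v 0 : ℤ)) ≠ 0 := by exact_mod_cast (hvpos 0 (by omega)).ne'
    simp only [show Finset.Icc 1 0 = (∅ : Finset ℕ) from rfl, Finset.sum_empty, add_zero] at heq
    exact ⟨mul_right_cancel₀ hv0 heq, fun i h1 h2 => by omega⟩
  | succ j ih =>
    intro hj a b t u ht hu heq
    have hj' : j ≤ g := by omega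
    rw [Finset.sum_Icc_succ_top (by omega), Finset.sum_Icc_succ_top (by omega)] at heq
    set V : ℤ := (v (j+1) : ℤ)
    -- key identity
    have key : ((t (j+1) : ℤ) - u (j+1)) * V
        = (b - a) * v 0 + ∑ i ∈ Finset.Icc 1 j, ((u i : ℤ) - t i) * v i := by
      have expand : ∑ i ∈ Finset.Icc 1 j, ((u i : ℤ) - t i) * v i
          = (∑ i ∈ Finset.Icc 1 j, (u i : ℤ) * v i) - ∑ i ∈ Finset.Icc 1 j, (t i : ℤ) * v i := by
        rw [← Finset.sum_sub_distrib]
        exact Finset.sum_congr rfl fun i _ => by ring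
      rw [expand]
      linarith [heq]
    -- e j divides the RHS
    have hdvd : (e j : ℤ) ∣ ((t (j+1) : ℤ) - u (j+1)) * V := by
      rw [key]
      refine dvd_add ?_ (Finset.dvd_sum fun i hi => ?_)
      · exact Dvd.dvd.mul_left (Int.natCast_dvd_natCast.mpr
          (aux_e_dvd_v g v e he0 he j hj' 0 (by omega))) _
      · refine Dvd.dvd.mul_left (Int.natCast_dvd_natCast.mpr ?_) _
        simp only [Finset.mem_Icc] at hi
        exact aux_e_dvd_v g v e he0 he j hj' i hi.2
    -- cancel e (j+1)
    have h1 : n (j+1) * e (j+1) = e j := by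
      rw [hn (j+1) (by omega) hj]
      exact Nat.div_mul_cancel (by rw [he (j+1) (by omega) hj]; exact Nat.gcd_dvd_left _ _)
    obtain ⟨w, hw⟩ : e (j+1) ∣ v (j+1) := by
      rw [he (j+1) (by omega) hj]; exact Nat.gcd_dvd_right _ _
    have hepos : 0 < e (j+1) := aux_e_pos g v e hvpos he0 he (j+1) hj
    have hcop : Nat.Coprime (n (j+1)) w := by
      have hg : e (j+1) = Nat.gcd (e j) (v (j+1)) := he (j+1) (by omega) hj
      have := Nat.coprime_div_gcd_div_gcd (m := e j) (n := v (j+1)) (by rw [← hg]; exact hepos)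
      rw [← hg] at this
      have hnw : n (j+1) = e j / e (j+1) := hn (j+1) (by omega) hj
      have hwv : w = v (j+1) / e (j+1) := by
        rw [hw]; rw [Nat.mul_div_cancel_left _ hepos]
      rwa [← hnw, ← hwv] at this
    set D : ℤ := (t (j+1) : ℤ) - u (j+1)
    have hdvd2 : (n (j+1) : ℤ) ∣ D * w := by
      have hVe : V = (e (j+1) : ℤ) * w := by simp only [V, hw]; push_cast; ring
      have : ((n (j+1) : ℤ) * e (j+1)) ∣ (D * w) * e (j+1) := by
        rw [show (D * w) * (e (j+1) : ℤ) = D * V by rw [hVe]; ring]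
        rw [show ((n (j+1) : ℤ)) * e (j+1) = (e j : ℤ) by exact_mod_cast h1]
        exact hdvd
      have hene : (e (j+1) : ℤ) ≠ 0 := by exact_mod_cast hepos.ne'
      exact (mul_dvd_mul_iff_right hene).mp (by rw [mul_comm (n (j+1) : ℤ) _] at this ⊢; exact this)
    have hdvdD : (n (j+1) : ℤ) ∣ D := by
      have hic : IsCoprime ((n (j+1) : ℤ)) (w : ℤ) := by
        rw [Int.isCoprime_iff_gcd_eq_one]
        exact_mod_cast hcop
      exact hic.dvd_of_dvd_mul_right hdvd2
    have hD0 : D = 0 := by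
      refine Int.eq_zero_of_abs_lt_dvd hdvdD ?_
      have htb : ((t (j+1) : ℤ)) < n (j+1) := by exact_mod_cast ht (j+1) (by omega) (by omega)
      have hub : ((u (j+1) : ℤ)) < n (j+1) := by exact_mod_cast hu (j+1) (by omega) (by omega)
      have h0t : (0:ℤ) ≤ t (j+1) := Int.natCast_nonneg _
      have h0u : (0:ℤ) ≤ u (j+1) := Int.natCast_nonneg _
      rw [abs_lt]
      constructor <;> simp only [D] <;> omega
    have htu : t (j+1) = u (j+1) := by
      have : (t (j+1) : ℤ) = u (j+1) := by simp only [D] at hD0; omega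
      exact_mod_cast this
    have heq' : a * v 0 + ∑ i ∈ Finset.Icc 1 j, (t i : ℤ) * v i
        = b * v 0 + ∑ i ∈ Finset.Icc 1 j, (u i : ℤ) * v i := by
      rw [htu] at heq
      linarith [heq]
    obtain ⟨hab, hrest⟩ := ih hj' a b t u (fun i h1' h2' => ht i h1' (by omega))
      (fun i h1' h2' => hu i h1' (by omega)) heq'
    refine ⟨hab, fun i h1' h2' => ?_⟩
    rcases Nat.lt_or_ge i (j+1) with h | h
    · exact hrest i h1' (by omega)
    · have : i = j + 1 := by omega
      subst this; exact htu

/-- Any element of the semigroup has a standard representation. -/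
lemma aux_std (hn1 : ∀ i, 1 ≤ i → i ≤ g → 1 < n i)
    (hmem : ∀ i, 1 ≤ i → i ≤ g → InSemi v i (n i * v i)) :
    ∀ j ≤ g, ∀ N, InSemi v (j+1) N →
      ∃ t : ℕ → ℕ, (∀ i, 1 ≤ i → i ≤ j → t i < n i) ∧
        N = t 0 * v 0 + ∑ i ∈ Finset.Icc 1 j, t i * v i := by
  intro j
  induction j with
  | zero =>
    intro _ N hN
    obtain ⟨c, hc⟩ := hN
    refine ⟨c, by omega, ?_⟩
    simpa using hc
  | succ j ih =>
    intro hj N hN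
    have hj' : j ≤ g := by omega
    obtain ⟨c, hc⟩ := hN
    rw [Finset.sum_range_succ] at hc
    set q := c (j+1) / n (j+1) with hq
    set r := c (j+1) % n (j+1) with hr
    have hrn : r < n (j+1) := Nat.mod_lt _ (by have := hn1 (j+1) (by omega) hj; omega)
    obtain ⟨d, hd⟩ := hmem (j+1) (by omega) hj
    have hM : InSemi v (j+1) (∑ i ∈ Finset.range (j+1), (c i + q * d i) * v i) :=
      ⟨fun i => c i + q * d i, rfl⟩
    obtain ⟨t, hbound, ht⟩ := ih hj' _ hM
    have hsplit : N = (∑ i ∈ Finset.range (j+1), (c i + q * d i) * v i) + r * v (j+1) := by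
      have hcj : c (j+1) = n (j+1) * q + r := (Nat.div_add_mod _ _).symm ▸ by omega
      calc N = ∑ i ∈ Finset.range (j+1), c i * v i + c (j+1) * v (j+1) := hc
        _ = ∑ i ∈ Finset.range (j+1), c i * v i
              + (q * (n (j+1) * v (j+1)) + r * v (j+1)) := by rw [hcj]; ring
        _ = ∑ i ∈ Finset.range (j+1), c i * v i
              + (q * ∑ i ∈ Finset.range (j+1), d i * v i + r * v (j+1)) := by rw [hd]
        _ = (∑ i ∈ Finset.range (j+1), (c i + q * d i) * v i) + r * v (j+1) := by
              rw [Finset.mul_sum, ← add_assoc, ← Finset.sum_add_distrib]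
              congr 1
              exact Finset.sum_congr rfl fun i _ => by ring
    refine ⟨fun i => if i = j + 1 then r else t i, ?_, ?_⟩
    · intro i h1 h2
      by_cases hij : i = j + 1
      · subst hij
        show (if j + 1 = j + 1 then r else t (j+1)) < n (j+1)
        rw [if_pos rfl]; exact hrn
      · show (if i = j + 1 then r else t i) < n i
        rw [if_neg hij]; exact hbound i h1 (by omega)
    · rw [Finset.sum_Icc_succ_top (by omega : 1 ≤ j + 1)]
      show N = (if 0 = j + 1 then r else t 0) * v 0
          + ((∑ i ∈ Finset.Icc 1 j, (if i = j + 1 then r else t i) * v i)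
            + (if j + 1 = j + 1 then r else t (j+1)) * v (j+1))
      rw [if_neg (by omega), if_pos rfl]
      have hinner : ∑ i ∈ Finset.Icc 1 j, (if i = j + 1 then r else t i) * v i
          = ∑ i ∈ Finset.Icc 1 j, t i * v i := by
        refine Finset.sum_congr rfl fun i hi => ?_
        have : i ≠ j + 1 := by simp at hi; omega
        rw [if_neg this]
      rw [hinner, hsplit, ht]
      ring

end Aux

/-- If `δ ∈ ℕ \ Γ_k` (where `Γ_k = ⟨v_0/e_k, …, v_k/e_k⟩`), then
`∑_{i=k+1}^{g} s_i v_i + e_k δ ∉ Γ = ⟨v_0, …, v_g⟩` whenever `0 ≤ s_i < n_i`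
for `k+1 < i ≤ g` and `1 ≤ s_{k+1} < n_{k+1}`. -/
theorem shifted_gap_not_in_gamma (g : ℕ) (v e n : ℕ → ℕ)
    (hvpos : ∀ i ≤ g, 0 < v i)
    (he0 : e 0 = v 0)
    (he : ∀ i, 1 ≤ i → i ≤ g → e i = Nat.gcd (e (i - 1)) (v i))
    (heg : e g = 1)
    (hn : ∀ i, 1 ≤ i → i ≤ g → n i = e (i - 1) / e i)
    (hn1 : ∀ i, 1 ≤ i → i ≤ g → 1 < n i)
    (hn0 : n 0 = 1)
    (hinc : ∀ i < g, n i * v i < v (i + 1))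
    (hmem : ∀ i, 1 ≤ i → i ≤ g → InSemi v i (n i * v i))
    (k : ℕ) (hk : k < g)
    (δ : ℕ) (hδ : ¬ InSemi (fun i => v i / e k) (k + 1) δ)
    (s : ℕ → ℕ)
    (hs : ∀ i, k + 1 < i → i ≤ g → s i < n i)
    (hsk : 1 ≤ s (k + 1) ∧ s (k + 1) < n (k + 1)) :
    ¬ InSemi v (g + 1) (∑ i ∈ Finset.Icc (k + 1) g, s i * v i + e k * δ) := by
  intro hN
  set Nval : ℕ := ∑ i ∈ Finset.Icc (k + 1) g, s i * v i + e k * δ with hNval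
  have hkg : k ≤ g := by omega
  have hekpos : 0 < e k := aux_e_pos g v e hvpos he0 he k hkg
  -- standard representation of Nval
  obtain ⟨t, htbound, htrep⟩ := aux_std g v n hn1 hmem g le_rfl Nval hN
  -- representation of e k * δ with integer leading coefficient
  obtain ⟨a, t', ht'bound, ht'rep⟩ := aux_exE g v e n hvpos he0 he hn hn1 k hkg
    ((e k : ℤ) * δ) ⟨(δ : ℤ), rfl⟩
  -- the combined coefficient function
  set u : ℕ → ℕ := fun i => if i ≤ k then t' i else s i with hu
  have hubound : ∀ i, 1 ≤ i → i ≤ g → u i < n i := by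
    intro i h1 h2
    by_cases hik : i ≤ k
    · simp only [hu, if_pos hik]
      exact ht'bound i h1 hik
    · simp only [hu, if_neg hik]
      rcases Nat.lt_or_ge (k+1) i with h | h
      · exact hs i h h2
      · have : i = k + 1 := by omega
        subst this; exact hsk.2
  -- Nval as an integer combination with leading coefficient a
  have hNrep2 : (Nval : ℤ) = a * v 0 + ∑ i ∈ Finset.Icc 1 g, (u i : ℤ) * v i := by
    have hsplitsum : ∑ i ∈ Finset.Icc 1 g, (u i : ℤ) * v i
        = (∑ i ∈ Finset.Icc 1 k, (u i : ℤ) * v i)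
          + ∑ i ∈ Finset.Icc (k+1) g, (u i : ℤ) * v i := by
      rw [show Finset.Icc 1 g = Finset.Ioc 0 g from (Finset.Icc_add_one_left_eq_Ioc 0 g).symm ▸ rfl,
          show Finset.Icc 1 k = Finset.Ioc 0 k from (Finset.Icc_add_one_left_eq_Ioc 0 k).symm ▸ rfl,
          show Finset.Icc (k+1) g = Finset.Ioc k g from (Finset.Icc_add_one_left_eq_Ioc k g).symm ▸ rfl]
      exact (Finset.sum_Ioc_consecutive _ (by omega) hkg).symm
    have h1 : ∑ i ∈ Finset.Icc 1 k, (u i : ℤ) * v i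
        = ∑ i ∈ Finset.Icc 1 k, (t' i : ℤ) * v i := by
      refine Finset.sum_congr rfl fun i hi => ?_
      simp only [Finset.mem_Icc] at hi
      simp only [hu, if_pos hi.2]
    have h2 : ∑ i ∈ Finset.Icc (k+1) g, (u i : ℤ) * v i
        = ∑ i ∈ Finset.Icc (k+1) g, (s i : ℤ) * v i := by
      refine Finset.sum_congr rfl fun i hi => ?_
      simp only [Finset.mem_Icc] at hi
      have : ¬ i ≤ k := by omega
      simp only [hu, if_neg this]
    have hNc : (Nval : ℤ) = ∑ i ∈ Finset.Icc (k+1) g, (s i : ℤ) * v i + (e k : ℤ) * δ := by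
      rw [hNval]; push_cast; ring
    rw [hsplitsum, h1, h2, hNc, ht'rep]
    ring
  -- standard rep of Nval in ℤ form
  have hNrep1 : (Nval : ℤ) = (t 0 : ℤ) * v 0 + ∑ i ∈ Finset.Icc 1 g, (t i : ℤ) * v i := by
    rw [htrep]; push_cast; ring
  -- uniqueness
  obtain ⟨hab, -⟩ := aux_uniq g v e n hvpos he0 he hn g le_rfl (t 0 : ℤ) a t u
    htbound hubound (hNrep1.symm.trans hNrep2)
  have ha0 : 0 ≤ a := by rw [← hab]; exact Int.natCast_nonneg _
  -- build a representation of δ in Γ_k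
  apply hδ
  set c : ℕ → ℕ := fun i => if i = 0 then a.toNat else t' i with hcdef
  refine ⟨c, ?_⟩
  have hcancel : e k * δ = e k * ∑ j ∈ Finset.range (k+1), c j * (v j / e k) := by
    have hnat : e k * δ = a.toNat * v 0 + ∑ i ∈ Finset.Icc 1 k, t' i * v i := by
      have : ((e k * δ : ℕ) : ℤ)
          = ((a.toNat * v 0 + ∑ i ∈ Finset.Icc 1 k, t' i * v i : ℕ) : ℤ) := by
        push_cast
        rw [Int.toNat_of_nonneg ha0]
        rw [show ((e k : ℤ)) * δ = a * v 0 + ∑ i ∈ Finset.Icc 1 k, (t' i : ℤ) * v i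
          from ht'rep]
      exact_mod_cast this
    have hexpand : e k * ∑ j ∈ Finset.range (k+1), c j * (v j / e k)
        = ∑ j ∈ Finset.range (k+1), c j * v j := by
      rw [Finset.mul_sum]
      refine Finset.sum_congr rfl fun j hj => ?_
      simp only [Finset.mem_range] at hj
      have hdvd : e k ∣ v j := aux_e_dvd_v g v e he0 he k hkg j (by omega)
      rw [show e k * (c j * (v j / e k)) = c j * (e k * (v j / e k)) by ring,
          Nat.mul_div_cancel' hdvd]
    have hrangesplit : ∑ j ∈ Finset.range (k+1), c j * v j
        = c 0 * v 0 + ∑ j ∈ Finset.Icc 1 k, c j * v j := by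
      rw [show Finset.range (k+1) = insert 0 (Finset.Icc 1 k) by
        ext x; simp [Finset.mem_range, Finset.mem_insert, Finset.mem_Icc]; omega]
      rw [Finset.sum_insert (by simp)]
    have hc0 : c 0 = a.toNat := by simp [hcdef]
    have hcrest : ∑ j ∈ Finset.Icc 1 k, c j * v j = ∑ j ∈ Finset.Icc 1 k, t' j * v j := by
      refine Finset.sum_congr rfl fun j hj => ?_
      simp only [Finset.mem_Icc] at hj
      have : j ≠ 0 := by omega
      simp [hcdef, this]
    rw [hexpand, hrangesplit, hc0, hcrest, hnat]
  exact Nat.eq_of_mul_eq_mul_left hekpos hcancel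
end
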